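/- arXiv:math/0007007 — 8 statements merged into one kernel-verified Lean document; each statement's English description precedes it below -/
import Mathlib

section
/- Let B be a graded-commutative ℕ-graded ℚ-algebra whose degree-0 component B_0 is one-dimensional, spanned by the identity element (B_0 = ℚ·1). Let A ⊆ B be a graded subalgebra that is finite-dimensional as a ℚ-vector space, let n ≥ 1 be an integer, and let D : A → B be a derivation of degree −2n of A with values in B. Then D(a) = 0 for every a ∈ A_{2n}. -/
/-- Lemma 5.1, "vanish", of Belegradek–Kapovitch.
Let `B` be a graded-commutative ℕ-graded ℚ-algebra with `B₀ = ℚ·1`, let `A ⊆ B` be a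
graded subalgebra that is finite-dimensional over ℚ, let `n ≥ 1`, and let `D : A → B` be a
derivation of degree `-2n` of `A` with values in `B`.  Then `D` vanishes on `A_{2n}`. -/
theorem negative_derivation_vanishes_in_degree_two_n
    {B : Type} [Ring B] [Algebra ℚ B]
    (𝒜 : ℕ → Submodule ℚ B) [GradedAlgebra 𝒜]
    -- graded commutativity of `B`
    (hcomm : ∀ (p q : ℕ), ∀ a ∈ 𝒜 p, ∀ b ∈ 𝒜 q,
      a * b = (-1 : B) ^ (p * q) * (b * a))
    -- `B₀ = ℚ·1`
    (hB0 : 𝒜 0 = Submodule.span ℚ {(1 : B)})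
    -- `A` is a graded subalgebra of `B` …
    (A : Subalgebra ℚ B)
    (hAgr : ∀ a ∈ A, ∀ p : ℕ, (DirectSum.decompose 𝒜 a p : B) ∈ A)
    -- … which is finite-dimensional as a ℚ-vector space
    [FiniteDimensional ℚ A]
    (n : ℕ) (hn : 1 ≤ n)
    -- `D` is a ℚ-linear map `A → B` which is a derivation of degree `-2n`:
    (D : A →ₗ[ℚ] B)
    (hdeg : ∀ (p : ℕ) (a : A), (a : B) ∈ 𝒜 (p + 2 * n) → D a ∈ 𝒜 p)
    (hlow : ∀ (p : ℕ) (a : A), p < 2 * n → (a : B) ∈ 𝒜 p → D a = 0)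
    (hleib : ∀ (p : ℕ) (a b : A), (a : B) ∈ 𝒜 p →
      D (a * b) = D a * (b : B) + (-1 : B) ^ (2 * n * p) * ((a : B) * D b)) :
    ∀ a : A, (a : B) ∈ 𝒜 (2 * n) → D a = 0 := by
  intro a ha
  by_cases h0 : (a : B) = 0
  · have : a = 0 := Subtype.ext h0
    simp [this]
  -- D a ∈ 𝒜 0, hence D a = λ • 1
  have hDa : D a ∈ 𝒜 0 := hdeg 0 a (by simpa using ha)
  rw [hB0] at hDa
  obtain ⟨l, hl⟩ := Submodule.mem_span_singleton.mp hDa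
  -- sign is 1
  have hsign : ((-1 : B)) ^ (2 * n * (2 * n)) = 1 :=
    Even.neg_one_pow ⟨n * (2 * n), by ring⟩
  -- powers lie in graded pieces
  have hpow : ∀ k : ℕ, ((a : B)) ^ k ∈ 𝒜 (k * (2 * n)) := by
    intro k
    simpa using SetLike.pow_mem_graded k ha
  -- key formula for D on powers
  have hkey : ∀ k : ℕ, D (a ^ (k + 1)) = ((k + 1 : ℚ) * l) • ((a : B) ^ k) := by
    intro k
    induction k with
    | zero => simp [← hl]
    | succ k ih =>
      have hle := hleib (2 * n) a (a ^ (k + 1)) ha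
      rw [← pow_succ'] at hle
      rw [hle, hsign, one_mul, ih, ← hl]
      push_cast
      rw [smul_mul_assoc, one_mul, mul_smul_comm, ← pow_succ', ← add_smul]
      ring_nf
  -- nilpotency: some power of a vanishes
  have hnil : ∃ N : ℕ, (a : B) ^ (N + 1) = 0 := by
    by_contra hc
    push_neg at hc
    have hli : LinearIndependent ℚ (fun k : ℕ => a ^ (k + 1) : ℕ → A) := by
      rw [linearIndependent_iff']
      intro s g hsum i hi
      -- map the relation to B
      have hsumB : ∑ k ∈ s, g k • ((a : B) ^ (k + 1)) = 0 := by
        have := congrArg (A.val) hsum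
        simpa using this
      -- project to degree (i+1)*(2n)
      let proj : B →ₗ[ℚ] B :=
        (𝒜 ((i + 1) * (2 * n))).subtype ∘ₗ
          (DirectSum.component ℚ ℕ (fun j => 𝒜 j) ((i + 1) * (2 * n))) ∘ₗ
          (DirectSum.decomposeLinearEquiv 𝒜).toLinearMap
      have hproj : ∀ x : B, proj x = (DirectSum.decompose 𝒜 x ((i + 1) * (2 * n)) : B) :=
        fun x => rfl
      have h1 : proj (∑ k ∈ s, g k • ((a : B) ^ (k + 1))) = 0 := by
        rw [hsumB, map_zero]
      rw [map_sum] at h1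
      have h2 : ∀ k ∈ s, proj (g k • ((a : B) ^ (k + 1)))
          = if k = i then g k • ((a : B) ^ (k + 1)) else 0 := by
        intro k _
        rw [map_smul, hproj]
        by_cases hk : k = i
        · subst hk
          rw [DirectSum.decompose_of_mem_same 𝒜 (hpow (k + 1)), if_pos rfl]
        · rw [if_neg hk]
          have hne : (k + 1) * (2 * n) ≠ (i + 1) * (2 * n) := by
            intro h
            have h2n : 0 < 2 * n := by omega
            have := Nat.eq_of_mul_eq_mul_right h2n h
            exact hk (by omega)
          rw [DirectSum.decompose_of_mem_ne 𝒜 (hpow (k + 1)) hne, smul_zero]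
      rw [Finset.sum_congr rfl h2, Finset.sum_ite_eq' s i
        (fun k => g k • ((a : B) ^ (k + 1))), if_pos hi] at h1
      rcases smul_eq_zero.mp h1 with h | h
      · exact h
      · exact absurd h (hc i)
    have := hli.lt_aleph0_of_finiteDimensional (K := ℚ) (V := A)
    rw [Cardinal.mk_nat] at this
    exact lt_irrefl _ this
  -- take the minimal vanishing power
  have hex : ∃ N, (a : B) ^ (N + 1) = 0 := hnil
  classical
  let N := Nat.find hex
  have hN : (a : B) ^ (N + 1) = 0 := Nat.find_spec hex
  have hNpos : 1 ≤ N := by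
    rcases Nat.eq_zero_or_pos N with h | h
    · exfalso; apply h0; have := hN; rw [h] at this; simpa using this
    · exact h
  have hprev : (a : B) ^ N ≠ 0 := by
    have := Nat.find_min hex (m := N - 1) (by omega)
    have hNe : N - 1 + 1 = N := by omega
    rwa [hNe] at this
  -- apply D to a^(N+1) = 0
  have haN : (a : A) ^ (N + 1) = 0 := by
    apply Subtype.ext
    simpa using hN
  have h3 : ((N + 1 : ℚ) * l) • ((a : B) ^ N) = 0 := by
    rw [← hkey N, haN, map_zero]
  rcases smul_eq_zero.mp h3 with h | h
  · have hl0 : l = 0 := by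
      have hne : (N + 1 : ℚ) ≠ 0 := by positivity
      exact (mul_eq_zero.mp h).resolve_left hne
    rw [← hl, hl0, zero_smul]
  · exact absurd h hprev
end

section
/- Let A be a graded-commutative ℕ-graded ℚ-algebra that is finite-dimensional as a ℚ-vector space, with A_0 = ℚ·1 (one-dimensional, spanned by the identity) and A_1 = 0. Then every derivation D : A → A of negative degree vanishes on A_2, i.e. D(a) = 0 for all a ∈ A_2. -/
/-- algebraic core of Theorem 1.1 of Belegradek–Kapovitch.
Let `A` be a graded-commutative ℕ-graded ℚ-algebra, finite-dimensional over ℚ, with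
`A₀ = ℚ·1` and `A₁ = 0`.  Then every derivation `D : A → A` of negative degree `-j`
(`j ≥ 1`) vanishes on `A₂`. -/
theorem negative_derivation_vanishes_on_degree_two
    {A : Type} [Ring A] [Algebra ℚ A]
    (𝒜 : ℕ → Submodule ℚ A) [GradedAlgebra 𝒜]
    -- graded commutativity of `A`
    (hcomm : ∀ (p q : ℕ), ∀ a ∈ 𝒜 p, ∀ b ∈ 𝒜 q,
      a * b = (-1 : A) ^ (p * q) * (b * a))
    -- `A₀ = ℚ·1`
    (h0 : 𝒜 0 = Submodule.span ℚ {(1 : A)})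
    -- `A₁ = 0`
    (h1 : 𝒜 1 = ⊥)
    -- `A` is finite-dimensional as a ℚ-vector space
    [FiniteDimensional ℚ A]
    (j : ℕ) (hj : 1 ≤ j)
    -- `D` is a ℚ-linear self-map of `A` which is a derivation of degree `-j`:
    (D : A →ₗ[ℚ] A)
    (hdeg : ∀ (p : ℕ), ∀ a ∈ 𝒜 (p + j), D a ∈ 𝒜 p)
    (hlow : ∀ (p : ℕ), p < j → ∀ a ∈ 𝒜 p, D a = 0)
    (hleib : ∀ (p : ℕ) (a b : A), a ∈ 𝒜 p →
      D (a * b) = D a * b + (-1 : A) ^ (j * p) * (a * D b)) :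
    ∀ a ∈ 𝒜 2, D a = 0 := by
  intro a ha
  rcases lt_trichotomy j 2 with hj2 | rfl | hj2
  · -- j = 1 : D a ∈ 𝒜 1 = ⊥
    interval_cases j
    have hmem : D a ∈ 𝒜 1 := hdeg 1 a (by simpa using ha)
    rw [h1] at hmem
    simpa using hmem
  · -- j = 2 : the nilpotency argument
    -- D a ∈ 𝒜 0 = ℚ·1
    have hmem : D a ∈ 𝒜 0 := hdeg 0 a (by simpa using ha)
    rw [h0, Submodule.mem_span_singleton] at hmem
    obtain ⟨c, hc⟩ := hmem
    have hc1 : D a = c • (1 : A) := hc.symm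
    -- a is nilpotent
    have hnil : ∃ n, a ^ n = 0 := by
      by_contra h
      push_neg at h
      have hind : iSupIndep 𝒜 :=
        (DirectSum.Decomposition.isInternal 𝒜).submodule_iSupIndep
      have hinj : Function.Injective (fun n : ℕ => 2 * n) := fun n m hnm => by
        simpa using hnm
      have hLI : LinearIndependent ℚ (fun n : ℕ => a ^ n) :=
        (hind.comp hinj).linearIndependent (fun n => 𝒜 (2 * n))
          (fun n => by
            have := SetLike.pow_mem_graded n ha
            simpa [mul_comm] using this)
          h
      exact Module.Finite.not_linearIndependent_of_infinite _ hLI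
    -- formula D (a ^ (k+1)) = ((k+1) * c) • a ^ k
    have hpow : ∀ k : ℕ, D (a ^ (k + 1)) = (((k : ℚ) + 1) * c) • a ^ k := by
      intro k
      induction k with
      | zero => simpa using hc1
      | succ k ih =>
        have : D (a * a ^ (k + 1)) =
            D a * a ^ (k + 1) + (-1 : A) ^ (2 * 2) * (a * D (a ^ (k + 1))) :=
          hleib 2 a (a ^ (k + 1)) ha
        rw [ih, hc1] at this
        have h4 : ((-1 : A)) ^ (2 * 2) = 1 := by norm_num
        rw [h4, one_mul] at this
        push_cast
        calc D (a ^ (k + 1 + 1)) = D (a * a ^ (k + 1)) := by rw [pow_succ' a (k + 1)]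
          _ = c • (1 : A) * a ^ (k + 1) + a * (((k : ℚ) + 1) * c) • a ^ k := this
          _ = (((k : ℚ) + 1 + 1) * c) • a ^ (k + 1) := by
              rw [smul_mul_assoc, one_mul, mul_smul_comm, ← pow_succ']
              rw [← add_smul]
              congr 1
              push_cast
              ring
    -- minimal n with a ^ n = 0
    by_cases ha0 : a = 0
    · simp [ha0]
    have hne : ∃ n, a ^ n = 0 := hnil
    classical
    let n := Nat.find hne
    have hn0 : a ^ n = 0 := Nat.find_spec hne
    have hnpos : 1 ≤ n := by
      rcases Nat.eq_zero_or_pos n with h | h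
      · exfalso
        have := hn0
        rw [h, pow_zero] at this
        -- 1 = 0 in A: then a = 0
        exact ha0 (by calc a = a * 1 := (mul_one a).symm
          _ = a * 0 := by rw [this]
          _ = 0 := mul_zero a)
      · exact h
    have hprev : a ^ (n - 1) ≠ 0 := Nat.find_min hne (by omega)
    have : D (a ^ (n - 1 + 1)) = (((n - 1 : ℕ) : ℚ) + 1) • c • a ^ (n - 1) := by
      rw [hpow (n - 1), mul_smul]
    rw [show n - 1 + 1 = n from by omega, hn0, map_zero] at this
    have hcz : c = 0 := by
      have h2 := this.symm
      rcases smul_eq_zero.mp h2 with h | h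
      · exfalso
        have : ((n - 1 : ℕ) : ℚ) + 1 ≠ 0 := by positivity
        exact this h
      · rcases smul_eq_zero.mp h with h' | h'
        · exact h'
        · exact absurd h' hprev
    rw [hc1, hcz, zero_smul]
  · -- j > 2 : degree reasons
    exact hlow 2 hj2 a ha
end

section
/- Let n ≥ 1 be an integer and let A be a graded-commutative ℕ-graded ℚ-algebra that is finite-dimensional as a ℚ-vector space, with A_0 = ℚ·1, and suppose A is generated as a ℚ-algebra by its homogeneous component A_{2n}. Then the only derivation D : A → A of negative degree is the zero map. -/
/-- Section 6 of Belegradek–Kapovitch: the class `ℋ(2n)` is contained in `ℋ`.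
Let `n ≥ 1` and let `A` be a graded-commutative ℕ-graded ℚ-algebra, finite-dimensional over
ℚ, with `A₀ = ℚ·1`, generated as a ℚ-algebra by its component `A_{2n}`.  Then the only
derivation of `A` of negative degree `-j` (`j ≥ 1`) is the zero map. -/
theorem negative_derivation_of_singly_generated_algebra_is_zero
    {A : Type} [Ring A] [Algebra ℚ A]
    (𝒜 : ℕ → Submodule ℚ A) [GradedAlgebra 𝒜]
    -- graded commutativity of `A`
    (hcomm : ∀ (p q : ℕ), ∀ a ∈ 𝒜 p, ∀ b ∈ 𝒜 q,
      a * b = (-1 : A) ^ (p * q) * (b * a))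
    -- `A₀ = ℚ·1`
    (h0 : 𝒜 0 = Submodule.span ℚ {(1 : A)})
    -- `A` is finite-dimensional as a ℚ-vector space
    [FiniteDimensional ℚ A]
    (n : ℕ) (hn : 1 ≤ n)
    -- `A` is generated as a ℚ-algebra by `A_{2n}`
    (hgen : Algebra.adjoin ℚ ((𝒜 (2 * n) : Submodule ℚ A) : Set A) = ⊤)
    (j : ℕ) (hj : 1 ≤ j)
    -- `D` is a ℚ-linear self-map of `A` which is a derivation of degree `-j`:
    (D : A →ₗ[ℚ] A)
    (hdeg : ∀ (p : ℕ), ∀ a ∈ 𝒜 (p + j), D a ∈ 𝒜 p)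
    (hlow : ∀ (p : ℕ), p < j → ∀ a ∈ 𝒜 p, D a = 0)
    (hleib : ∀ (p : ℕ) (a b : A), a ∈ 𝒜 p →
      D (a * b) = D a * b + (-1 : A) ^ (j * p) * (a * D b)) :
    D = 0 := by
  classical
  -- trivial case: A = 0
  by_cases htriv : (1 : A) = 0
  · have : Subsingleton A := subsingleton_of_zero_eq_one htriv.symm
    ext a
    exact Subsingleton.elim _ _
  set M : Submodule ℚ A := 𝒜 (2 * n) with hM
  -- powers of M live in the expected graded pieces
  have hpow : ∀ k : ℕ, M ^ k ≤ 𝒜 (2 * n * k) := by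
    intro k
    induction k with
    | zero =>
      rw [pow_zero, Submodule.one_eq_span, Submodule.span_le, mul_zero]
      intro x hx
      rcases hx with rfl
      exact SetLike.one_mem_graded 𝒜
    | succ k ih =>
      rw [pow_succ]
      refine le_trans (mul_le_mul' ih le_rfl) ?_
      have : 𝒜 (2 * n * k) * M ≤ 𝒜 (2 * n * k + 2 * n) :=
        Submodule.mul_le.mpr fun x hx y hy => SetLike.mul_mem_graded hx hy
      have e : 2 * n * k + 2 * n = 2 * n * (k + 1) := by ring
      rwa [e] at this
  -- the supremum of the powers of M is everything
  have hsup : (⨆ k : ℕ, M ^ k) = ⊤ := by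
    have hmul : (⨆ k : ℕ, M ^ k) * (⨆ k : ℕ, M ^ k) ≤ ⨆ k : ℕ, M ^ k := by
      rw [Submodule.iSup_mul]
      refine iSup_le fun k => ?_
      rw [Submodule.mul_iSup]
      refine iSup_le fun l => ?_
      rw [← pow_add]
      exact le_iSup (fun k : ℕ => M ^ k) (k + l)
    let S : Subalgebra ℚ A :=
      (⨆ k : ℕ, M ^ k).toSubalgebra
        (le_iSup (fun k : ℕ => M ^ k) 0 (show (1:A) ∈ M ^ 0 by
          rw [pow_zero, Submodule.one_eq_span]
          exact Submodule.mem_span_singleton_self 1))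
        (fun x y hx hy => hmul (Submodule.mul_mem_mul hx hy))
    have hle : Algebra.adjoin ℚ ((𝒜 (2 * n) : Submodule ℚ A) : Set A) ≤ S := by
      refine Algebra.adjoin_le ?_
      intro x hx
      exact le_iSup (fun k : ℕ => M ^ k) 1 (show x ∈ M ^ 1 by rwa [pow_one])
    rw [hgen] at hle
    have : S = ⊤ := top_le_iff.mp hle
    have := congrArg Subalgebra.toSubmodule this
    rwa [Submodule.toSubalgebra_toSubmodule, Algebra.top_toSubmodule] at this
  -- graded pieces in degrees not a multiple of 2n vanish
  have hbot : ∀ p : ℕ, (∀ k : ℕ, p ≠ 2 * n * k) → 𝒜 p = ⊥ := by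
    intro p hp
    have indep := (DirectSum.Decomposition.isInternal 𝒜).submodule_iSupIndep
    have hle : 𝒜 p ≤ ⨆ (q : ℕ) (_ : q ≠ p), 𝒜 q := by
      refine le_trans (le_top : 𝒜 p ≤ ⊤) ?_
      rw [← hsup]
      refine iSup_le fun k => le_trans (hpow k) ?_
      exact le_iSup₂ (f := fun (q : ℕ) (_ : q ≠ p) => 𝒜 q) (2 * n * k) (fun h => hp k h.symm)
    exact le_bot_iff.mp ((indep p) le_rfl hle)
  -- D kills the generators
  have hD2n : ∀ x ∈ 𝒜 (2 * n), D x = 0 := by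
    intro x hx
    rcases lt_trichotomy (2 * n) j with hlt | heq | hgt
    · exact hlow (2 * n) hlt x hx
    · -- j = 2n : use nilpotency
      -- D x ∈ 𝒜 0 = ℚ·1
      have hDx0 : D x ∈ 𝒜 0 := hdeg 0 x (by rw [zero_add, ← heq]; exact hx)
      rw [h0, Submodule.mem_span_singleton] at hDx0
      obtain ⟨q, hq⟩ := hDx0
      -- x is nilpotent: from integrality and the grading
      have hint : IsIntegral ℚ x := IsIntegral.of_finite ℚ x
      obtain ⟨P, hmonic, hev⟩ := hint
      set d := P.natDegree with hd
      have hsum : ∑ i ∈ Finset.range (d + 1), P.coeff i • x ^ i = 0 := by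
        rw [← Polynomial.aeval_eq_sum_range]; exact hev
      have hterm : ∀ i : ℕ, P.coeff i • x ^ i ∈ 𝒜 (2 * n * i) := by
        intro i
        refine Submodule.smul_mem _ _ ?_
        have := SetLike.pow_mem_graded i hx
        rwa [smul_eq_mul, mul_comm] at this
      have hxd : x ^ d = 0 := by
        have := congrArg (GradedRing.proj 𝒜 (2 * n * d)) hsum
        rw [map_zero, map_sum] at this
        rw [Finset.sum_eq_single d] at this
        · rw [GradedRing.proj_apply,
            DirectSum.decompose_of_mem_same 𝒜 (hterm d)] at this
          have hcd : P.coeff d = 1 := hmonic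
          rw [hcd, one_smul] at this
          exact this
        · intro i hi hne
          rw [GradedRing.proj_apply,
            DirectSum.decompose_of_mem_ne 𝒜 (hterm i)
              (fun h => hne (Nat.eq_of_mul_eq_mul_left (by omega) h))]
        · intro h
          exact absurd (Finset.self_mem_range_succ d) h
      -- minimal m with x^m = 0
      have hex : ∃ m : ℕ, x ^ m = 0 := ⟨d, hxd⟩
      set m := Nat.find hex with hmdef
      have hm : x ^ m = 0 := Nat.find_spec hex
      have hmin : ∀ i < m, x ^ i ≠ 0 := fun i hi => Nat.find_min hex hi
      have hm1 : 1 ≤ m := by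
        rcases Nat.eq_zero_or_pos m with h | h
        · exfalso; rw [h, pow_zero] at hm; exact htriv hm
        · exact h
      -- sign is +1
      have hsign : ((-1 : A)) ^ (j * (2 * n)) = 1 := by
        rw [← heq]
        exact Even.neg_one_pow (by exact ⟨n * (2 * n), by ring⟩)
      -- D (x^(i+1)) = (i+1) q • x^i
      have hpowD : ∀ i : ℕ, D (x ^ (i + 1)) = (((i : ℚ) + 1) * q) • x ^ i := by
        intro i
        induction i with
        | zero => simp [hq.symm]
        | succ i ih =>
          have : x ^ (i + 1 + 1) = x * x ^ (i + 1) := by rw [← pow_succ']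
          rw [this, hleib (2 * n) x (x ^ (i + 1)) hx, hsign, one_mul, ih,
            ← hq, smul_mul_assoc, one_mul, mul_smul_comm, ← pow_succ']
          rw [← add_smul]
          congr 1
          push_cast
          ring
      have := hpowD (m - 1)
      rw [Nat.sub_add_cancel hm1, hm, map_zero] at this
      have hz : (((m - 1 : ℕ) : ℚ) + 1) * q = 0 := by
        by_contra hne
        exact hmin (m - 1) (by omega) (by
          have := smul_eq_zero.mp this.symm
          tauto)
      have hq0 : q = 0 := by
        have : ((m - 1 : ℕ) : ℚ) + 1 ≠ 0 := by positivity
        exact (mul_eq_zero.mp hz).resolve_left this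
      rw [← hq, hq0, zero_smul]
    · -- j < 2n : D x lands in a vanishing piece
      have hmem : D x ∈ 𝒜 (2 * n - j) := by
        refine hdeg (2 * n - j) x ?_
        have e : 2 * n - j + j = 2 * n := by omega
        rwa [e]
      have hb : 𝒜 (2 * n - j) = ⊥ := by
        refine hbot _ fun k h => ?_
        rcases Nat.eq_zero_or_pos k with rfl | hk
        · omega
        · have : 2 * n * 1 ≤ 2 * n * k := Nat.mul_le_mul_left _ hk
          omega
      rw [hb] at hmem
      exact hmem
  -- D vanishes on all powers of M, hence everywhere
  have hker : ∀ k : ℕ, M ^ k ≤ LinearMap.ker D := by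
    intro k
    induction k with
    | zero =>
      rw [pow_zero, Submodule.one_eq_span, Submodule.span_le]
      intro x hx
      rcases hx with rfl
      simp only [SetLike.mem_coe, LinearMap.mem_ker]
      exact hlow 0 (by omega) 1 (SetLike.one_mem_graded 𝒜)
    | succ k ih =>
      rw [pow_succ']
      refine Submodule.mul_le.mpr fun u hu v hv => ?_
      have hDu : D u = 0 := hD2n u hu
      have hDv : D v = 0 := ih hv
      simp only [LinearMap.mem_ker]
      rw [hleib (2 * n) u v hu, hDu, hDv, zero_mul, mul_zero, mul_zero, add_zero]
  have : (⊤ : Submodule ℚ A) ≤ LinearMap.ker D := by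
    rw [← hsup]
    exact iSup_le hker
  exact LinearMap.ker_eq_top.mp (top_le_iff.mp this)
end

section
/- Let n ≥ 1 be integer and let A be a graded-commutative ℕ-graded ℚ-algebra that is finite-dimensional as a ℚ-vector space, with A_0 = ℚ·1 and with A_i = 0 for all i with 0 < i < 2n. Let E ⊆ A be the graded subalgebra of A generated by A_{2n}. Then every derivation of E of negative degree with values in A is the zero map. -/
/-!
A homogeneous element of positive degree in a finite-dimensional graded algebra is nilpotent,
since its powers lie in distinct graded pieces. A derivation `D` of degree `-j` kills a
generator `x ∈ A_{2n}`: for `j < 2n` because `D x ∈ A_{2n-j} = 0`, for `j > 2n` because its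
target degree is negative, and for `j = 2n` because `D x = c` is a scalar, so that
`D (x ^ (k + 1)) = (k + 1) c x ^ k`, which for `x ^ (k + 1) = 0 ≠ x ^ k` forces `c = 0`.
The kernel of `D` then contains `1` and is stable under left multiplication by generators,
so it is everything.
-/

theorem GradedAlgebra.isNilpotent_of_mem_of_pos {K A : Type*} [Field K] [Ring A] [Algebra K A]
    [FiniteDimensional K A] (𝒜 : ℕ → Submodule K A) [GradedAlgebra 𝒜]
    {d : ℕ} (hd : 0 < d) {x : A} (hx : x ∈ 𝒜 d) : IsNilpotent x := by
  by_contra hnil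
  have hpow_ne : ∀ k : ℕ, x ^ (k + 1) ≠ 0 := fun k hk => hnil ⟨k + 1, hk⟩
  have hpow_mem : ∀ k : ℕ, x ^ (k + 1) ∈ 𝒜 ((k + 1) * d) := fun k => by
    simpa using SetLike.pow_mem_graded (k + 1) hx
  have hdeg_inj : Function.Injective fun k : ℕ => (k + 1) * d := fun a b hab => by
    simpa using Nat.eq_of_mul_eq_mul_right hd hab
  have hindep : iSupIndep fun k : ℕ => 𝒜 ((k + 1) * d) :=
    ((DirectSum.Decomposition.isInternal 𝒜).submodule_iSupIndep).comp hdeg_inj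
  have := (hindep.linearIndependent _ hpow_mem hpow_ne).finite_of_isNoetherian
  exact not_finite ℕ

namespace LinearMap

variable {K A : Type*} [Field K] [Ring A] [Algebra K A] {E : Subalgebra K A}
  (D : E →ₗ[K] A) {x : E} {c : K}

theorem map_pow_succ_of_leibniz (hleib : ∀ b, D (x * b) = D x * b + x * D b)
    (hc : D x = algebraMap K A c) (k : ℕ) :
    D (x ^ (k + 1)) = ((k + 1 : K) * c) • (x : A) ^ k := by
  induction k with
  | zero => simp [hc, Algebra.algebraMap_eq_smul_one]
  | succ k ih =>
    rw [pow_succ', hleib, ih, hc, Algebra.algebraMap_eq_smul_one]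
    push_cast
    simp only [smul_mul_assoc, one_mul, mul_smul_comm, ← pow_succ']
    module

theorem map_eq_zero_of_leibniz_of_isNilpotent [CharZero K]
    (hleib : ∀ b, D (x * b) = D x * b + x * D b) (hc : D x = algebraMap K A c)
    (hx : IsNilpotent (x : A)) : D x = 0 := by
  nontriviality A
  obtain ⟨N, hN⟩ : ∃ N, nilpotencyClass (x : A) = N + 1 :=
    Nat.exists_eq_add_one.mpr (pos_nilpotencyClass_iff.mpr hx)
  have hxN : x ^ (N + 1) = 0 := Subtype.ext (by simpa [hN] using pow_nilpotencyClass hx)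
  have hxN' : (x : A) ^ N ≠ 0 := by simpa [hN] using pow_pred_nilpotencyClass hx
  have hNc : ((N + 1 : K) * c) • (x : A) ^ N = 0 := by
    rw [← map_pow_succ_of_leibniz D hleib hc, hxN, map_zero]
  have hc0 : c = 0 := by
    simpa [Nat.cast_add_one_ne_zero] using (smul_eq_zero.mp hNc).resolve_right hxN'
  rw [hc, hc0, map_zero]

end LinearMap

theorem Algebra.linearMap_adjoin_eq_zero_of_mul_left_mem_ker {R A M : Type*} [CommSemiring R]
    [Semiring A] [Algebra R A] [AddCommMonoid M] [Module R M] {s : Set A} (D : adjoin R s →ₗ[R] M)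
    (h1 : D 1 = 0) (hmul : ∀ x : adjoin R s, (x : A) ∈ s → ∀ b, D b = 0 → D (x * b) = 0) :
    D = 0 := by
  suffices h : ∀ a (ha : a ∈ adjoin R s) b, D b = 0 → D (⟨a, ha⟩ * b) = 0 by
    ext ⟨a, ha⟩
    simpa using h a ha 1 h1
  intro a ha
  induction ha using Algebra.adjoin_induction with
  | mem x hx => exact hmul _ hx
  | algebraMap r =>
    intro b hb
    have : (⟨algebraMap R A r, algebraMap_mem _ r⟩ : adjoin R s) * b = r • b := by
      ext; simp [Algebra.smul_def]
    rw [this, map_smul, hb, smul_zero]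
  | add x y hx hy ihx ihy =>
    intro b hb
    rw [show (⟨x + y, add_mem hx hy⟩ : adjoin R s) = ⟨x, hx⟩ + ⟨y, hy⟩ from rfl, add_mul,
      map_add, ihx b hb, ihy b hb, add_zero]
  | mul x y hx hy ihx ihy =>
    intro b hb
    rw [show (⟨x * y, mul_mem hx hy⟩ : adjoin R s) = ⟨x, hx⟩ * ⟨y, hy⟩ from rfl, mul_assoc]
    exact ihx _ (ihy b hb)

theorem negative_derivation_of_generated_subalgebra_is_zero_general
    {A : Type} [Ring A] [Algebra ℚ A]
    (𝒜 : ℕ → Submodule ℚ A) [GradedAlgebra 𝒜]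
    -- `A₀ = ℚ·1`
    (h0 : 𝒜 0 = Submodule.span ℚ {(1 : A)})
    -- `A` is finite-dimensional as a ℚ-vector space
    [FiniteDimensional ℚ A]
    (n : ℕ)
    -- `A_i = 0` for `0 < i < 2n`
    (hvan : ∀ i : ℕ, 0 < i → i < 2 * n → 𝒜 i = ⊥)
    -- `E` is the subalgebra of `A` generated by `A_{2n}`
    (E : Subalgebra ℚ A)
    (hE : E = Algebra.adjoin ℚ ((𝒜 (2 * n) : Submodule ℚ A) : Set A))
    (j : ℕ) (hj : 1 ≤ j)
    -- `D` is a ℚ-linear map `E → A` which is a derivation of degree `-j` with values in `A`: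
    (D : E →ₗ[ℚ] A)
    (hdeg : ∀ (p : ℕ) (a : E), (a : A) ∈ 𝒜 (p + j) → D a ∈ 𝒜 p)
    (hlow : ∀ (p : ℕ), p < j → ∀ a : E, (a : A) ∈ 𝒜 p → D a = 0)
    (hleib : ∀ (p : ℕ) (a b : E), (a : A) ∈ 𝒜 p →
      D (a * b) = D a * (b : A) + (-1 : A) ^ (j * p) * ((a : A) * D b)) :
    D = 0 := by
  subst hE
  refine Algebra.linearMap_adjoin_eq_zero_of_mul_left_mem_ker D
    (hlow 0 hj 1 (SetLike.one_mem_graded 𝒜)) fun x hx b hb => ?_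
  have hDx : D x = 0 := by
    rcases lt_trichotomy j (2 * n) with hlt | rfl | hgt
    · have hDx := hdeg (2 * n - j) x (by rwa [Nat.sub_add_cancel hlt.le])
      rwa [hvan _ (by omega) (by omega), Submodule.mem_bot] at hDx
    · obtain ⟨c, hc⟩ := Submodule.mem_span_singleton.mp (h0 ▸ hdeg 0 x (by simpa using hx))
      have hsign : (-1 : A) ^ (2 * n * (2 * n)) = 1 := ((even_two_mul n).mul_right _).neg_one_pow
      refine D.map_eq_zero_of_leibniz_of_isNilpotent (c := c) (fun b => ?_) ?_
        (GradedAlgebra.isNilpotent_of_mem_of_pos 𝒜 hj hx)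
      · rw [hleib _ x b hx, hsign, one_mul]
      · rw [← hc, Algebra.algebraMap_eq_smul_one]
    · exact hlow _ hgt x hx
  rw [hleib _ x b hx, hDx, hb, zero_mul, mul_zero, mul_zero, add_zero]

/-- algebraic core of Theorem 6.4 of Belegradek–Kapovitch.
Let `n ≥ 1` and let `A` be a graded-commutative ℕ-graded ℚ-algebra, finite-dimensional over
ℚ, with `A₀ = ℚ·1` and `A_i = 0` for `0 < i < 2n`.  Let `E ⊆ A` be the (graded) subalgebra
generated by `A_{2n}`.  Then every derivation of `E` of negative degree `-j` (`j ≥ 1`)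
with values in `A` is the zero map. -/
theorem negative_derivation_of_generated_subalgebra_is_zero
    {A : Type} [Ring A] [Algebra ℚ A]
    (𝒜 : ℕ → Submodule ℚ A) [GradedAlgebra 𝒜]
    -- graded commutativity of `A`
    (hcomm : ∀ (p q : ℕ), ∀ a ∈ 𝒜 p, ∀ b ∈ 𝒜 q,
      a * b = (-1 : A) ^ (p * q) * (b * a))
    -- `A₀ = ℚ·1`
    (h0 : 𝒜 0 = Submodule.span ℚ {(1 : A)})
    -- `A` is finite-dimensional as a ℚ-vector space
    [FiniteDimensional ℚ A]
    (n : ℕ) (hn : 1 ≤ n)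
    -- `A_i = 0` for `0 < i < 2n`
    (hvan : ∀ i : ℕ, 0 < i → i < 2 * n → 𝒜 i = ⊥)
    -- `E` is the subalgebra of `A` generated by `A_{2n}`
    (E : Subalgebra ℚ A)
    (hE : E = Algebra.adjoin ℚ ((𝒜 (2 * n) : Submodule ℚ A) : Set A))
    (j : ℕ) (hj : 1 ≤ j)
    -- `D` is a ℚ-linear map `E → A` which is a derivation of degree `-j` with values in `A`:
    (D : E →ₗ[ℚ] A)
    (hdeg : ∀ (p : ℕ) (a : E), (a : A) ∈ 𝒜 (p + j) → D a ∈ 𝒜 p)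
    (hlow : ∀ (p : ℕ), p < j → ∀ a : E, (a : A) ∈ 𝒜 p → D a = 0)
    (hleib : ∀ (p : ℕ) (a b : E), (a : A) ∈ 𝒜 p →
      D (a * b) = D a * (b : A) + (-1 : A) ^ (j * p) * ((a : A) * D b)) :
    D = 0 :=
  negative_derivation_of_generated_subalgebra_is_zero_general 𝒜 h0 n hvan E hE j hj D hdeg hlow
    hleib
end

section
/- Let C be a graded-commutative ℕ-graded ℚ-algebra, let B ⊆ C be a graded subalgebra with B_p = 0 for every odd p, and let z ∈ C be a homogeneous element of odd degree such that the ℚ-linear map B ⊕ B → C sending (b, b') to b + z·b' is bijective (i.e. C is a free B-module with basis {1, z}). If the only derivation of B of negative degree (with values in B) is the zero map, then every derivation D : C → C of negative degree satisfies D(b) = 0 for all b ∈ B. -/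
section Helpers

variable {C : Type} [Ring C] [Algebra ℚ C] (𝒞 : ℕ → Submodule ℚ C) [GradedAlgebra 𝒞]

private lemma bk_mem_of_components (x : C) (p : ℕ)
    (h : ∀ q : ℕ, q ≠ p → (DirectSum.decompose 𝒞 x q : C) = 0) : x ∈ 𝒞 p := by
  classical
  have hx : x = (DirectSum.decompose 𝒞 x p : C) := by
    conv_lhs => rw [← DirectSum.sum_support_decompose 𝒞 x]
    rw [Finset.sum_eq_single p (fun q _ hq => h q hq)]
    intro hp
    rw [DFinsupp.notMem_support_iff.mp hp, ZeroMemClass.coe_zero]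
  rw [hx]; exact SetLike.coe_mem _

private lemma bk_zero_of_components (x : C)
    (h : ∀ q : ℕ, (DirectSum.decompose 𝒞 x q : C) = 0) : x = 0 := by
  classical
  rw [← DirectSum.sum_support_decompose 𝒞 x]
  exact Finset.sum_eq_zero fun q _ => h q

end Helpers

/-- algebraic core of Theorem 6.1 of Belegradek–Kapovitch.
Let `C` be a graded-commutative ℕ-graded ℚ-algebra, `B ⊆ C` a graded subalgebra which is
concentrated in even degrees, and `z ∈ C` a homogeneous element of odd degree such that
`(b, b') ↦ b + z·b'` is a bijection `B ⊕ B → C` (i.e. `C` is a free `B`-module with basis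
`{1, z}`).  If the only negative derivation of `B` (with values in `B`) is zero, then every
negative derivation `D : C → C` vanishes on `B`. -/
theorem negative_derivation_of_odd_sphere_extension_vanishes_on_base
    {C : Type} [Ring C] [Algebra ℚ C]
    (𝒞 : ℕ → Submodule ℚ C) [GradedAlgebra 𝒞]
    -- graded commutativity of `C`
    (hcomm : ∀ (p q : ℕ), ∀ a ∈ 𝒞 p, ∀ b ∈ 𝒞 q,
      a * b = (-1 : C) ^ (p * q) * (b * a))
    -- `B` is a graded subalgebra of `C` …
    (B : Subalgebra ℚ C)
    (hBgr : ∀ b ∈ B, ∀ p : ℕ, (DirectSum.decompose 𝒞 b p : C) ∈ B)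
    -- … with `B_p = 0` for every odd `p`
    (hBev : ∀ p : ℕ, Odd p → B.toSubmodule ⊓ 𝒞 p = ⊥)
    -- `z ∈ C` is homogeneous of odd degree `l`
    (z : C) (l : ℕ) (hl : Odd l) (hz : z ∈ 𝒞 l)
    -- `C` is a free `B`-module with basis `{1, z}`
    (hfree : Function.Bijective
      (fun bb : B × B => (bb.1 : C) + z * (bb.2 : C)))
    -- the only negative derivation of `B` with values in `B` is the zero map
    (hBder : ∀ j : ℕ, 1 ≤ j → ∀ D' : B →ₗ[ℚ] B,
      (∀ (p : ℕ) (b : B), (b : C) ∈ 𝒞 (p + j) → ((D' b : B) : C) ∈ 𝒞 p) →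
      (∀ (p : ℕ), p < j → ∀ b : B, (b : C) ∈ 𝒞 p → D' b = 0) →
      (∀ (p : ℕ) (a b : B), (a : C) ∈ 𝒞 p →
        D' (a * b) = D' a * b + (-1 : B) ^ (j * p) * (a * D' b)) →
      D' = 0) :
    -- then every negative derivation of `C` vanishes on `B`
    ∀ j : ℕ, 1 ≤ j → ∀ D : C →ₗ[ℚ] C,
      (∀ (p : ℕ), ∀ a ∈ 𝒞 (p + j), D a ∈ 𝒞 p) →
      (∀ (p : ℕ), p < j → ∀ a ∈ 𝒞 p, D a = 0) →
      (∀ (p : ℕ) (a b : C), a ∈ 𝒞 p →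
        D (a * b) = D a * b + (-1 : C) ^ (j * p) * (a * D b)) →
      ∀ b ∈ B, D b = 0 := by
  intro j hj D hdeg hlow hder
  -- the free-module structure, as a linear equivalence
  let F : B × B →ₗ[ℚ] C :=
    { toFun := fun bb => (bb.1 : C) + z * (bb.2 : C)
      map_add' := by
        rintro ⟨a, a'⟩ ⟨b, b'⟩
        show ((a + b : B) : C) + z * ((a' + b' : B) : C)
            = ((a : C) + z * (a' : C)) + ((b : C) + z * (b' : C))
        push_cast
        rw [mul_add]
        abel
      map_smul' := by
        rintro c ⟨a, a'⟩
        show ((c • a : B) : C) + z * ((c • a' : B) : C)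
            = c • ((a : C) + z * (a' : C))
        push_cast
        rw [smul_add, mul_smul_comm] }
  have hFbij : Function.Bijective F := hfree
  let e : (B × B) ≃ₗ[ℚ] C := LinearEquiv.ofBijective F hFbij
  let β : B →ₗ[ℚ] B := LinearMap.fst ℚ B B ∘ₗ e.symm.toLinearMap ∘ₗ D ∘ₗ B.val.toLinearMap
  let γ : B →ₗ[ℚ] B := LinearMap.snd ℚ B B ∘ₗ e.symm.toLinearMap ∘ₗ D ∘ₗ B.val.toLinearMap
  have key : ∀ b : B, D (b : C) = (β b : C) + z * (γ b : C) := by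
    intro b
    exact (e.apply_symm_apply (D (b : C))).symm
  have hinj : ∀ u v u' v' : B,
      (u : C) + z * (v : C) = (u' : C) + z * (v' : C) → u = u' ∧ v = v' := by
    intro u v u' v' h
    have h2 : (u, v) = (u', v') := hfree.injective h
    exact ⟨congrArg Prod.fst h2, congrArg Prod.snd h2⟩
  -- graded components of an element written as `u + z·v`
  have hsplit : ∀ (u v : B) (p : ℕ), (u : C) + z * (v : C) ∈ 𝒞 p →
      (u : C) ∈ 𝒞 p ∧ ∀ r : ℕ, l + r ≠ p → (DirectSum.decompose 𝒞 (v : C) r : C) = 0 := by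
    intro u v p h
    have hcomp : ∀ r : ℕ, l + r ≠ p →
        (DirectSum.decompose 𝒞 (u : C) (l + r) : C) = 0 ∧
          (DirectSum.decompose 𝒞 (v : C) r : C) = 0 := by
      intro r hr
      have h0 : (DirectSum.decompose 𝒞 ((u : C) + z * (v : C)) (l + r) : C) = 0 :=
        DirectSum.decompose_of_mem_ne 𝒞 h (Ne.symm hr)
      have hadd : (DirectSum.decompose 𝒞 ((u : C) + z * (v : C)) (l + r) : C)
          = (DirectSum.decompose 𝒞 (u : C) (l + r) : C)
            + z * (DirectSum.decompose 𝒞 (v : C) r : C) := by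
        rw [DirectSum.decompose_add, DirectSum.add_apply, Submodule.coe_add,
          DirectSum.coe_decompose_mul_add_of_left_mem 𝒞 hz]
      set u1 : B := ⟨_, hBgr (u : C) u.2 (l + r)⟩
      set v1 : B := ⟨_, hBgr (v : C) v.2 r⟩
      have heq : (u1 : C) + z * (v1 : C) = ((0 : B) : C) + z * ((0 : B) : C) := by
        show (DirectSum.decompose 𝒞 (u : C) (l + r) : C)
            + z * (DirectSum.decompose 𝒞 (v : C) r : C) = _
        rw [← hadd, h0]; simp
      obtain ⟨h1, h2⟩ := hinj u1 v1 0 0 heq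
      exact ⟨congrArg Subtype.val h1, congrArg Subtype.val h2⟩
    constructor
    · apply bk_mem_of_components 𝒞 _ p
      intro q hq
      by_cases hql : l ≤ q
      · obtain ⟨r, rfl⟩ := Nat.exists_eq_add_of_le hql
        exact (hcomp r hq).1
      · have h0 : (DirectSum.decompose 𝒞 ((u : C) + z * (v : C)) q : C) = 0 :=
          DirectSum.decompose_of_mem_ne 𝒞 h (Ne.symm hq)
        have hzv : (DirectSum.decompose 𝒞 (z * (v : C)) q : C) = 0 :=
          DirectSum.coe_decompose_mul_of_left_mem_of_not_le 𝒞 hz hql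
        have hadd : (DirectSum.decompose 𝒞 ((u : C) + z * (v : C)) q : C)
            = (DirectSum.decompose 𝒞 (u : C) q : C)
              + (DirectSum.decompose 𝒞 (z * (v : C)) q : C) := by
          rw [DirectSum.decompose_add, DirectSum.add_apply, Submodule.coe_add]
        rw [hadd, hzv, add_zero] at h0
        exact h0
    · intro r hr
      exact (hcomp r hr).2
  -- the Leibniz rule for the two components
  have hmul : ∀ (p : ℕ) (a b : B), (a : C) ∈ 𝒞 p →
      (β (a * b) = β a * b + (-1 : B) ^ (j * p) * (a * β b)) ∧
      (γ (a * b) = γ a * b + (-1 : B) ^ ((j + l) * p) * (a * γ b)) := by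
    intro p a b ha
    have haz : ∀ x : C, (a : C) * (z * x) = (-1 : C) ^ (p * l) * (z * ((a : C) * x)) := by
      intro x
      rw [← mul_assoc, hcomm p l (a : C) ha z hz, mul_assoc, mul_assoc]
    apply hinj
    have hab : ((a * b : B) : C) = (a : C) * (b : C) := rfl
    calc ((β (a * b) : C)) + z * (γ (a * b) : C)
        = D ((a : C) * (b : C)) := by rw [← hab, ← key]
      _ = D (a : C) * (b : C) + (-1 : C) ^ (j * p) * ((a : C) * D (b : C)) := hder p _ _ ha
      _ = ((β a * b + (-1 : B) ^ (j * p) * (a * β b) : B) : C)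
            + z * ((γ a * b + (-1 : B) ^ ((j + l) * p) * (a * γ b) : B) : C) := by
          rw [key a, key b]
          push_cast
          rw [mul_add ((a : C)), haz]
          rw [show (j + l) * p = j * p + l * p from add_mul j l p, pow_add,
            show l * p = p * l from Nat.mul_comm l p]
          rcases Nat.even_or_odd (j * p) with hjp | hjp <;>
            rcases Nat.even_or_odd (p * l) with hpl | hpl <;>
              simp only [hjp.neg_one_pow, hpl.neg_one_pow, one_mul, mul_one,
                neg_mul, mul_neg, neg_neg, one_mul] <;>
              noncomm_ring
  -- `β` is a negative derivation of `B`, hence zero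
  have hβ0 : β = 0 := by
    apply hBder j hj
    · intro p b hb
      exact (hsplit (β b) (γ b) p (by rw [← key b]; exact hdeg p _ hb)).1
    · intro p hp b hb
      have h0 : D (b : C) = 0 := hlow p hp _ hb
      have heq : (β b : C) + z * (γ b : C) = ((0 : B) : C) + z * ((0 : B) : C) := by
        rw [← key b, h0]; simp
      exact (hinj _ _ _ _ heq).1
    · intro p a b ha
      exact (hmul p a b ha).1
  -- `γ` is a negative derivation of `B` of degree `-(j+l)`, hence zero
  have hγ0 : γ = 0 := by
    apply hBder (j + l) (le_trans hj (Nat.le_add_right j l))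
    · intro p b hb
      have hb' : (b : C) ∈ 𝒞 ((p + l) + j) := by
        rwa [show (p + l) + j = p + (j + l) by omega]
      have hs := hsplit (β b) (γ b) (p + l) (by rw [← key b]; exact hdeg _ _ hb')
      apply bk_mem_of_components 𝒞 _ p
      intro q hq
      exact hs.2 q (by omega)
    · intro p hp b hb
      by_cases hpj : p < j
      · have h0 : D (b : C) = 0 := hlow p hpj _ hb
        have heq : (β b : C) + z * (γ b : C) = ((0 : B) : C) + z * ((0 : B) : C) := by
          rw [← key b, h0]; simp
        exact (hinj _ _ _ _ heq).2
      · push_neg at hpj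
        have hb' : (b : C) ∈ 𝒞 ((p - j) + j) := by rwa [Nat.sub_add_cancel hpj]
        have hs := hsplit (β b) (γ b) (p - j) (by rw [← key b]; exact hdeg _ _ hb')
        have hγz : (γ b : C) = 0 := by
          apply bk_zero_of_components 𝒞
          intro q
          exact hs.2 q (by omega)
        exact Subtype.ext hγz
    · intro p a b ha
      exact (hmul p a b ha).2
  intro b hb
  have hkey := key ⟨b, hb⟩
  rw [hβ0, hγ0] at hkey
  simpa using hkey
end

section
/- Let C be a graded-commutative ℕ-graded ℚ-algebra that is finite-dimensional as a ℚ-vector space, with C_0 = ℚ·1. Let B ⊆ C be a graded subalgebra with B_0 = ℚ·1 and B_1 = B_2 = B_3 = 0, and let z_1, …, z_r ∈ C_3 be elements such that the 2^r square-free monomials z_{i_1}⋯z_{i_k} (over all subsets {i_1 < ⋯ < i_k} of {1, …, r}, including the empty product 1) form a basis of C as a left B-module. Then every derivation D : С → C of negative degree vanishes on C_4, i.e. D(a) = 0 for all a ∈ C_4. -/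
set_option synthInstance.maxHeartbeats 800000
set_option maxHeartbeats 1000000
set_option linter.unusedVariables false
set_option linter.unnecessarySimpa false

/-- The square-free monomial `z_{i₁}⋯z_{i_k}` associated to a subset
`I = {i₁ < ⋯ < i_k} ⊆ {1,…,r}` (factors multiplied in increasing order of the indices;
the empty product is `1`). -/
def sqFreeMonomial {C : Type} [Ring C] {r : ℕ} (z : Fin r → C) (I : Finset (Fin r)) : C :=
  ((I.sort (· ≤ ·)).map z).prod

lemma aux_list_prod_mem {C : Type} [Ring C] [Algebra ℚ C]
    (𝒞 : ℕ → Submodule ℚ C) [GradedAlgebra 𝒞] {r : ℕ} {z : Fin r → C}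
    (hz : ∀ i, z i ∈ 𝒞 3) :
    ∀ l : List (Fin r), (l.map z).prod ∈ 𝒞 (3 * l.length)
  | [] => by simpa using SetLike.one_mem_graded 𝒞
  | i :: l => by
    have h1 := SetLike.mul_mem_graded (hz i) (aux_list_prod_mem 𝒞 hz l)
    have h2 : 3 * (i :: l).length = 3 + 3 * l.length := by simp [List.length_cons]; ring
    rw [List.map_cons, List.prod_cons, h2]
    exact h1

lemma sqFreeMonomial_mem {C : Type} [Ring C] [Algebra ℚ C]
    (𝒞 : ℕ → Submodule ℚ C) [GradedAlgebra 𝒞] {r : ℕ} {z : Fin r → C}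
    (hz : ∀ i, z i ∈ 𝒞 3) (I : Finset (Fin r)) :
    sqFreeMonomial z I ∈ 𝒞 (3 * I.card) := by
  have := aux_list_prod_mem 𝒞 hz (I.sort (· ≤ ·))
  rwa [Finset.length_sort] at this

lemma aux_decompose_mul_of_mem {C : Type} [Ring C] [Algebra ℚ C]
    (𝒞 : ℕ → Submodule ℚ C) [GradedAlgebra 𝒞]
    {d : ℕ} {x : C} (hx : x ∈ 𝒞 d) (b : C) (p : ℕ) :
    (DirectSum.decompose 𝒞 (x * b) p : C) =
      if d ≤ p then x * (DirectSum.decompose 𝒞 b (p - d) : C) else 0 := by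
  classical
  have key : ∀ (s : Finset ℕ) (g : ℕ → C),
      (DirectSum.decompose 𝒞 (∑ q ∈ s, g q) p : C)
        = ∑ q ∈ s, (DirectSum.decompose 𝒞 (g q) p : C) := by
    intro s g
    induction s using Finset.cons_induction with
    | empty => simp
    | cons a s ha ih =>
        rw [Finset.sum_cons, DirectSum.decompose_add, DirectSum.add_apply,
          Submodule.coe_add, ih, Finset.sum_cons]
  conv_lhs => rw [← DirectSum.sum_support_decompose 𝒞 b, Finset.mul_sum]
  rw [key]
  by_cases h : d ≤ p
  · rw [if_pos h]
    have hmem : x * ((DirectSum.decompose 𝒞 b (p - d) : C)) ∈ 𝒞 p := by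
      have := SetLike.mul_mem_graded hx (DirectSum.decompose 𝒞 b (p - d)).2
      rwa [show d + (p - d) = p from by omega] at this
    rw [← DirectSum.decompose_of_mem_same 𝒞 hmem]
    refine Finset.sum_eq_single (p - d) ?_ ?_
    · intro q hq hqne
      refine DirectSum.decompose_of_mem_ne 𝒞
        (SetLike.mul_mem_graded hx (DirectSum.decompose 𝒞 b q).2) ?_
      omega
    · intro hns
      rw [DFinsupp.notMem_support_iff.mp hns]
      simp
  · rw [if_neg h]
    refine Finset.sum_eq_zero fun q hq => ?_
    refine DirectSum.decompose_of_mem_ne 𝒞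
      (SetLike.mul_mem_graded hx (DirectSum.decompose 𝒞 b q).2) ?_
    omega

lemma aux_decompose_finsum {C : Type} [Ring C] [Algebra ℚ C]
    (𝒞 : ℕ → Submodule ℚ C) [GradedAlgebra 𝒞] {ι : Type} (s : Finset ι) (g : ι → C) (p : ℕ) :
    (DirectSum.decompose 𝒞 (∑ q ∈ s, g q) p : C)
      = ∑ q ∈ s, (DirectSum.decompose 𝒞 (g q) p : C) := by
  classical
  induction s using Finset.cons_induction with
  | empty => simp
  | cons a s ha ih =>
      rw [Finset.sum_cons, DirectSum.decompose_add, DirectSum.add_apply,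
        Submodule.coe_add, ih, Finset.sum_cons]

lemma aux_decomp {C : Type} [Ring C] [Algebra ℚ C]
    (𝒞 : ℕ → Submodule ℚ C) [GradedAlgebra 𝒞]
    (B : Subalgebra ℚ C)
    (hBgr : ∀ b ∈ B, ∀ p : ℕ, (DirectSum.decompose 𝒞 b p : C) ∈ B)
    {r : ℕ} {z : Fin r → C} (hz : ∀ i, z i ∈ 𝒞 3)
    (hfree : Function.Surjective
      (fun f : Finset (Fin r) → B =>
        ∑ I : Finset (Fin r), sqFreeMonomial z I * ((f I : B) : C)))
    (p : ℕ) (a : C) (ha : a ∈ 𝒞 p) :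
    ∃ c : Finset (Fin r) → C, (∀ I, c I ∈ B) ∧ (∀ I, c I ∈ 𝒞 (p - 3 * I.card)) ∧
      (∀ I, p < 3 * I.card → c I = 0) ∧
      a = ∑ I : Finset (Fin r), sqFreeMonomial z I * c I := by
  classical
  obtain ⟨f, hf⟩ := hfree a
  simp only at hf
  refine ⟨fun I => if 3 * I.card ≤ p
      then (DirectSum.decompose 𝒞 ((f I : C)) (p - 3 * I.card) : C) else 0, ?_, ?_, ?_, ?_⟩
  · intro I; dsimp only; split_ifs
    · exact hBgr _ (f I).2 _
    · exact B.zero_mem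
  · intro I; dsimp only; split_ifs
    · exact (DirectSum.decompose 𝒞 _ _).2
    · exact Submodule.zero_mem _
  · intro I h; dsimp only; rw [if_neg (by omega)]
  · calc a = (DirectSum.decompose 𝒞 (∑ I : Finset (Fin r),
          sqFreeMonomial z I * ((f I : B) : C)) p : C) := by
          rw [hf, DirectSum.decompose_of_mem_same 𝒞 ha]
      _ = ∑ I : Finset (Fin r),
          (DirectSum.decompose 𝒞 (sqFreeMonomial z I * ((f I : B) : C)) p : C) :=
          aux_decompose_finsum 𝒞 _ _ p
      _ = _ := Finset.sum_congr rfl fun I _ => by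
          rw [aux_decompose_mul_of_mem 𝒞 (sqFreeMonomial_mem 𝒞 hz I)]
          split_ifs with h
          · simp [if_pos h]
          · simp [if_neg h]

/-- algebraic core of Theorem 1.2 of Belegradek–Kapovitch on biquotients.
Let `C` be a graded-commutative ℕ-graded ℚ-algebra, finite-dimensional over ℚ, with
`C₀ = ℚ·1`.  Let `B ⊆ C` be a graded subalgebra with `B₁ = B₂ = B₃ = 0`, and let
`z₁, …, z_r ∈ C₃` be such that the `2^r` square-free monomials in the `z_i` form a basis of
`C` as a left `B`-module.  Then every negative derivation `D : C → C` vanishes on `C₄`. -/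
theorem negative_derivation_vanishes_in_degree_four
    {C : Type} [Ring C] [Algebra ℚ C]
    (𝒞 : ℕ → Submodule ℚ C) [GradedAlgebra 𝒞]
    -- graded commutativity of `C`
    (hcomm : ∀ (p q : ℕ), ∀ a ∈ 𝒞 p, ∀ b ∈ 𝒞 q,
      a * b = (-1 : C) ^ (p * q) * (b * a))
    -- `C₀ = ℚ·1`
    (h0 : 𝒞 0 = Submodule.span ℚ {(1 : C)})
    -- `C` is finite-dimensional as a ℚ-vector space
    [FiniteDimensional ℚ C]
    -- `B` is a graded subalgebra of `C` …
    (B : Subalgebra ℚ C)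
    (hBgr : ∀ b ∈ B, ∀ p : ℕ, (DirectSum.decompose 𝒞 b p : C) ∈ B)
    -- … with `B₁ = B₂ = B₃ = 0` (and automatically `B₀ = ℚ·1`)
    (hB1 : B.toSubmodule ⊓ 𝒞 1 = ⊥)
    (hB2 : B.toSubmodule ⊓ 𝒞 2 = ⊥)
    (hB3 : B.toSubmodule ⊓ 𝒞 3 = ⊥)
    (hB0 : B.toSubmodule ⊓ 𝒞 0 = Submodule.span ℚ {(1 : C)})
    -- `z₁, …, z_r` are elements of `C₃` …
    (r : ℕ) (z : Fin r → C) (hz : ∀ i, z i ∈ 𝒞 3)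
    -- … whose `2^r` square-free monomials form a basis of `C` as a left `B`-module
    (hfree : Function.Bijective
      (fun f : Finset (Fin r) → B =>
        ∑ I : Finset (Fin r), sqFreeMonomial z I * ((f I : B) : C)))
    (j : ℕ) (hj : 1 ≤ j)
    -- `D` is a ℚ-linear self-map of `C` which is a derivation of degree `-j`:
    (D : C →ₗ[ℚ] C)
    (hdeg : ∀ (p : ℕ), ∀ a ∈ 𝒞 (p + j), D a ∈ 𝒞 p)
    (hlow : ∀ (p : ℕ), p < j → ∀ a ∈ 𝒞 p, D a = 0)
    (hleib : ∀ (p : ℕ) (a b : C), a ∈ 𝒞 p →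
      D (a * b) = D a * b + (-1 : C) ^ (j * p) * (a * D b)) :
    ∀ a ∈ 𝒞 4, D a = 0 := by

  classical
  intro a ha
  rcases le_or_gt j 4 with hj4 | hj4
  swap
  · exact hlow 4 hj4 a ha
  by_cases ha0 : a = 0
  · rw [ha0, map_zero]
  have hnontriv : Nontrivial C := nontrivial_of_ne a 0 ha0
  have hDa : D a ∈ 𝒞 (4 - j) := hdeg (4 - j) a (by rwa [show 4 - j + j = 4 from by omega])
  -- 𝒞 1 = 𝒞 2 = 0
  have hClow : ∀ p : ℕ, p = 1 ∨ p = 2 → ∀ x ∈ 𝒞 p, x = 0 := by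
    intro p hp x hx
    obtain ⟨c, hcB, hcC, hc0, hxeq⟩ := aux_decomp 𝒞 B hBgr hz hfree.2 p x hx
    have hc : ∀ I : Finset (Fin r), c I = 0 := by
      intro I
      rcases Nat.eq_zero_or_pos I.card with h | h
      · have h1 : c I ∈ B.toSubmodule ⊓ 𝒞 p := by
          refine ⟨hcB I, ?_⟩
          have := hcC I
          rwa [show p - 3 * I.card = p from by omega] at this
        rcases hp with hp | hp <;> subst hp
        · rw [hB1] at h1; simpa using h1
        · rw [hB2] at h1; simpa using h1
      · exact hc0 I (by omega)
    simp [hxeq, hc]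
  -- a ∈ B
  have haB : a ∈ B := by
    obtain ⟨c, hcB, hcC, hc0, haeq⟩ := aux_decomp 𝒞 B hBgr hz hfree.2 4 a ha
    have hz' : ∀ I : Finset (Fin r), I ≠ ∅ → sqFreeMonomial z I * c I = 0 := by
      intro I hI
      have hcard : 1 ≤ I.card := Finset.card_pos.mpr (Finset.nonempty_iff_ne_empty.mpr hI)
      rcases eq_or_lt_of_le hcard with h1 | h2
      · have hmem : c I ∈ B.toSubmodule ⊓ 𝒞 1 := by
          refine ⟨hcB I, ?_⟩
          have := hcC I
          rwa [show 4 - 3 * I.card = 1 from by omega] at this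
        rw [hB1] at hmem
        rw [(Submodule.mem_bot ℚ).mp hmem, mul_zero]
      · rw [hc0 I (by omega), mul_zero]
    have haeq' : a = c ∅ := by
      rw [haeq, Finset.sum_eq_single ∅ (fun I _ hI => hz' I hI) (by simp)]
      simp [sqFreeMonomial]
    rw [haeq']; exact hcB ∅
  -- nilpotency
  have hnil : ∃ n : ℕ, a ^ (n + 1) = 0 := by
    by_contra hcon
    push_neg at hcon
    have hpow : ∀ n : ℕ, a ^ (n + 1) ∈ 𝒞 (4 * (n + 1)) := by
      intro n
      induction n with
      | zero => simpa using ha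
      | succ m ihm =>
        have := SetLike.mul_mem_graded ihm ha
        rwa [show 4 * (m + 1) + 4 = 4 * (m + 1 + 1) from by ring, ← pow_succ] at this
    have hind : iSupIndep (𝒞 ∘ fun n : ℕ => 4 * (n + 1)) :=
      (DirectSum.Decomposition.isInternal 𝒞).submodule_iSupIndep.comp (fun m n h => by omega)
    have hli : LinearIndependent ℚ fun n : ℕ => a ^ (n + 1) :=
      hind.linearIndependent _ hpow hcon
    exact Module.Finite.not_linearIndependent_of_infinite _ hli
  set N := Nat.find hnil with hNdef
  have hN : a ^ (N + 1) = 0 := Nat.find_spec hnil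
  have haN : a ^ N ≠ 0 := by
    rcases Nat.eq_zero_or_pos N with h | h
    · rw [h, pow_zero]; exact one_ne_zero
    · have hm := Nat.find_min hnil (show N - 1 < N from by omega)
      rwa [show N - 1 + 1 = N from by omega] at hm
  have hcom : a * D a = D a * a := by
    have h := hcomm 4 (4 - j) a ha (D a) hDa
    rwa [show (-1 : C) ^ (4 * (4 - j)) = 1 from Even.neg_one_pow ⟨2 * (4 - j), by ring⟩,
      one_mul] at h
  have hDpow : ∀ n : ℕ, D (a ^ (n + 1)) = ((n : ℚ) + 1) • (D a * a ^ n) := by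
    intro n
    induction n with
    | zero => simp
    | succ m ihm =>
      have hl := hleib 4 a (a ^ (m + 1)) ha
      rw [show a * a ^ (m + 1) = a ^ (m + 1 + 1) from (pow_succ' a (m + 1)).symm] at hl
      rw [hl, show (-1 : C) ^ (j * 4) = 1 from Even.neg_one_pow ⟨2 * j, by ring⟩,
        one_mul, ihm, mul_smul_comm, ← mul_assoc, hcom, mul_assoc, ← pow_succ']
      push_cast
      module
  have hDaN : D a * a ^ N = 0 := by
    have h := hDpow N
    rw [hN, map_zero] at h
    rcases smul_eq_zero.mp h.symm with h' | h'
    · exact absurd h' (by positivity)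
    · exact h'
  interval_cases j
  · -- j = 1
    norm_num at hDa
    obtain ⟨c, hcB, hcC, hc0, hDeq⟩ := aux_decomp 𝒞 B hBgr hz hfree.2 3 (D a) hDa
    set F : Finset (Fin r) → B := fun I => ⟨c I * a ^ N, mul_mem (hcB I) (pow_mem haB N)⟩
      with hFdef
    have hF : (fun f : Finset (Fin r) → B =>
        ∑ I : Finset (Fin r), sqFreeMonomial z I * ((f I : B) : C)) F
        = (fun f : Finset (Fin r) → B =>
        ∑ I : Finset (Fin r), sqFreeMonomial z I * ((f I : B) : C)) 0 := by
      simp only [hFdef, Pi.zero_apply, ZeroMemClass.coe_zero, mul_zero, Finset.sum_const_zero]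
      have h1 : (∑ I : Finset (Fin r), sqFreeMonomial z I * c I) * a ^ N = 0 := by
        rw [← hDeq, hDaN]
      rw [Finset.sum_mul] at h1
      simpa [mul_assoc] using h1
    have hF0 : F = 0 := hfree.1 hF
    have hcz : ∀ I : Finset (Fin r), c I * a ^ N = 0 := by
      intro I
      have := congrFun hF0 I
      simpa [hFdef, Subtype.ext_iff] using this
    have hc : ∀ I : Finset (Fin r), c I = 0 := by
      intro I
      rcases lt_trichotomy I.card 1 with h | h | h
      · have h1 : c I ∈ B.toSubmodule ⊓ 𝒞 3 := by
          refine ⟨hcB I, ?_⟩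
          have := hcC I
          rwa [show 3 - 3 * I.card = 3 from by omega] at this
        rw [hB3] at h1; simpa using h1
      · have h1 : c I ∈ 𝒞 0 := by
          have := hcC I
          rwa [show 3 - 3 * I.card = 0 from by omega] at this
        rw [h0, Submodule.mem_span_singleton] at h1
        obtain ⟨lam, hl⟩ := h1
        have h2 := hcz I
        rw [← hl, smul_mul_assoc, one_mul] at h2
        rcases smul_eq_zero.mp h2 with h' | h'
        · rw [← hl, h', zero_smul]
        · exact absurd h' haN
      · exact hc0 I (by omega)
    rw [hDeq]
    simp [hc]
  · -- j = 2
    norm_num at hDa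
    exact hClow 2 (Or.inr rfl) _ hDa
  · -- j = 3
    norm_num at hDa
    exact hClow 1 (Or.inl rfl) _ hDa
  · -- j = 4
    norm_num at hDa
    rw [h0, Submodule.mem_span_singleton] at hDa
    obtain ⟨lam, hl⟩ := hDa
    rw [← hl, smul_mul_assoc, one_mul] at hDaN
    rcases smul_eq_zero.mp hDaN with h' | h'
    · rw [← hl, h', zero_smul]
    · exact absurd h' haN
end

section
/- Let C be a graded-commutative ℕ-graded ℚ-algebra, B ⊆ C a graded subalgebra, and a_1, …, a_r homogeneous elements of C (of degrees |a_1|, …, |a_r|) that form a basis of C as a left B-module, i.e. every element of C is uniquely a sum Σ_i a_i·b_i with b_i ∈ B. Let D : C → C be a derivation of C of degree m, and define ℚ-linear maps D_i : B → B by the unique decomposition D(b) = Σ_i a_i·D_i(b) for b ∈ B. Then each D_i is a derivation of B of degree m − |a_i|: D_i(B_p) ⊆ B_{p+m−|a_i|} and D_i(b b') = D_i(b)·b' + (−1)^{(m−|a_i|)·p} b·D_i(b') for all b ∈ B_p, b' ∈ B. In particular, if m < 0, then every D_i is a derivation of B of negative degree. -/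
lemma neg_one_zpow_congr {a b : ℤ} (h : (a - b) % 2 = 0) : (-1:ℚ)^a = (-1:ℚ)^b := by
  obtain ⟨k, hk⟩ : ∃ k, a = b + 2*k := ⟨(a-b)/2, by omega⟩
  rw [hk, zpow_add₀ (by norm_num : (-1:ℚ) ≠ 0), zpow_mul]
  norm_num

/-- Lemma 6.1 ("decomp") of Belegradek–Kapovitch and the remark after it.
Let `C` be a graded-commutative ℕ-graded ℚ-algebra, `B ⊆ C` a graded subalgebra, and
`a₁, …, a_r` homogeneous elements of `C` forming a basis of `C` as a left `B`-module
(every element of `C` is uniquely `Σ_i a_i·b_i` with `b_i ∈ B`).  If `D : C → C` is a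
derivation of degree `m` and `D_i : B → B` are the component maps defined by
`D(b) = Σ_i a_i·D_i(b)` for `b ∈ B`, then each `D_i` is a derivation of `B` of degree
`m − |a_i|` (in particular, of negative degree whenever `m < 0`). -/
theorem components_of_derivation_are_derivations
    {C : Type} [Ring C] [Algebra ℚ C]
    (𝒞 : ℕ → Submodule ℚ C) [GradedAlgebra 𝒞]
    -- graded commutativity of `C`
    (hcomm : ∀ (p q : ℕ), ∀ a ∈ 𝒞 p, ∀ b ∈ 𝒞 q,
      a * b = (-1 : C) ^ (p * q) * (b * a))
    -- `B` is a graded subalgebra of `C`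
    (B : Subalgebra ℚ C)
    (hBgr : ∀ b ∈ B, ∀ p : ℕ, (DirectSum.decompose 𝒞 b p : C) ∈ B)
    -- `a₁, …, a_r` are homogeneous elements of `C`, of degrees `|a_i| = deg i`, …
    (r : ℕ) (a : Fin r → C) (deg : Fin r → ℕ) (ha : ∀ i, a i ∈ 𝒞 (deg i))
    -- … forming a basis of `C` as a left `B`-module
    (hfree : Function.Bijective
      (fun f : Fin r → B => ∑ i : Fin r, a i * ((f i : B) : C)))
    -- `D : C → C` is a derivation of `C` of degree `m`:
    (m : ℤ) (D : C →ₗ[ℚ] C)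
    (hdeg : ∀ (p : ℕ), ∀ c ∈ 𝒞 p, ∀ q : ℕ, (q : ℤ) = (p : ℤ) + m → D c ∈ 𝒞 q)
    (hlow : ∀ (p : ℕ), ∀ c ∈ 𝒞 p, (p : ℤ) + m < 0 → D c = 0)
    (hleib : ∀ (p : ℕ) (c c' : C), c ∈ 𝒞 p →
      D (c * c') = D c * c' + ((-1 : ℚ) ^ (m * (p : ℤ))) • (c * D c'))
    -- and `D_i : B → B` are the components of `D` on `B`: `D(b) = Σ_i a_i·D_i(b)`
    (Di : Fin r → (B →ₗ[ℚ] B))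
    (hDi : ∀ b : B, D (b : C) = ∑ i : Fin r, a i * ((Di i b : B) : C)) :
    -- then each `D_i` is a derivation of `B` of degree `m - deg i`:
    ∀ i : Fin r,
      (∀ (p : ℕ) (b : B), (b : C) ∈ 𝒞 p →
        (∀ q : ℕ, (q : ℤ) = (p : ℤ) + m - (deg i : ℤ) → ((Di i b : B) : C) ∈ 𝒞 q) ∧
        ((p : ℤ) + m - (deg i : ℤ) < 0 → Di i b = 0)) ∧
      (∀ (p : ℕ) (b b' : B), (b : C) ∈ 𝒞 p →
        Di i (b * b') = Di i b * b' +
          ((-1 : ℚ) ^ ((m - (deg i : ℤ)) * (p : ℤ))) • (b * Di i b')) := by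
  classical
  have hinj : ∀ f g : Fin r → B,
      (∑ i : Fin r, a i * ((f i : B) : C)) = (∑ i : Fin r, a i * ((g i : B) : C)) → f = g :=
    fun f g h => hfree.1 h
  intro i₀
  constructor
  · -- grading part
    intro p b hb
    set c : Fin r → B := fun i => Di i b with hc
    have hsum : D (b : C) = ∑ i : Fin r, a i * ((c i : B) : C) := hDi b
    by_cases hpm : (p : ℤ) + m < 0
    · have hD0 : D (b : C) = 0 := hlow p _ hb hpm
      have hc0 : c = 0 := by
        apply hinj
        rw [← hsum, hD0]
        simp
      have : Di i₀ b = 0 := by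
        have := congrFun hc0 i₀; simpa [hc] using this
      refine ⟨fun q hq => ?_, fun _ => this⟩
      exfalso; omega
    · push_neg at hpm
      obtain ⟨N, hN⟩ : ∃ N : ℕ, (N : ℤ) = (p : ℤ) + m := ⟨((p:ℤ)+m).toNat, by omega⟩
      have hDb : D (b : C) ∈ 𝒞 N := hdeg p _ hb N hN
      -- component description of decompositions
      have key : ∀ k : ℕ, k ≠ N → ∀ i : Fin r, deg i ≤ k →
          (DirectSum.decompose 𝒞 ((c i : B) : C) (k - deg i) : C) = 0 := by
        intro k hk i hik
        set g : Fin r → B := fun j =>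
          if h : deg j ≤ k then
            ⟨(DirectSum.decompose 𝒞 ((c j : B) : C) (k - deg j) : C),
              hBgr _ (c j).2 _⟩ else 0 with hg
        have hsum2 : (∑ j : Fin r, a j * ((g j : B) : C)) = (∑ j : Fin r, a j * ((0 : B) : C)) := by
          have : (∑ j : Fin r, a j * ((g j : B) : C))
              = (DirectSum.decompose 𝒞 (D (b : C)) k : C) := by
            rw [hsum, DirectSum.decompose_sum, DFinsupp.finset_sum_apply,
              AddSubmonoidClass.coe_finset_sum]
            refine (Finset.sum_congr rfl fun j _ => ?_).symm
            by_cases h : deg j ≤ k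
            · rw [DirectSum.coe_decompose_mul_of_left_mem_of_le 𝒞 (ha j) h]
              simp [hg, h]
            · rw [DirectSum.coe_decompose_mul_of_left_mem_of_not_le 𝒞 (ha j) h]
              simp [hg, h]
          rw [this, DirectSum.decompose_of_mem_ne 𝒞 hDb (Ne.symm hk)]
          simp
        have hg0 : g = 0 := hinj _ _ hsum2
        have := congrFun hg0 i
        rw [hg] at this
        simp only [dif_pos hik] at this
        exact congrArg Subtype.val this
      by_cases hiN : deg i₀ ≤ N
      · -- c i₀ is homogeneous of degree N - deg i₀
        have hzero : ∀ n : ℕ, n ≠ N - deg i₀ →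
            (DirectSum.decompose 𝒞 ((c i₀ : B) : C) n : C) = 0 := by
          intro n hn
          have hk : n + deg i₀ ≠ N := by omega
          have h2 := key (n + deg i₀) hk i₀ (by omega)
          rwa [Nat.add_sub_cancel] at h2
        have hmem : ((c i₀ : B) : C) ∈ 𝒞 (N - deg i₀) := by
          have heq : ((c i₀ : B) : C)
              = (DirectSum.decompose 𝒞 ((c i₀ : B) : C) (N - deg i₀) : C) := by
            conv_lhs => rw [← DirectSum.sum_support_decompose 𝒞 ((c i₀ : B) : C)]
            refine Finset.sum_eq_single _ (fun n _ hn => hzero n hn) (fun h => ?_)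
            simp only [DFinsupp.notMem_support_iff] at h
            rw [h]; rfl
          rw [heq]; exact SetLike.coe_mem _
        refine ⟨fun q hq => ?_, fun h => absurd h (by omega)⟩
        have : q = N - deg i₀ := by omega
        rwa [this]
      · -- all components vanish, c i₀ = 0
        have hzero : ∀ n : ℕ, (DirectSum.decompose 𝒞 ((c i₀ : B) : C) n : C) = 0 := by
          intro n
          have hk : n + deg i₀ ≠ N := by omega
          have h2 := key (n + deg i₀) hk i₀ (by omega)
          rwa [Nat.add_sub_cancel] at h2
        have h0 : ((c i₀ : B) : C) = 0 := by
          conv_lhs => rw [← DirectSum.sum_support_decompose 𝒞 ((c i₀ : B) : C)]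
          exact Finset.sum_eq_zero fun n _ => hzero n
        have hDi0 : Di i₀ b = 0 := Subtype.ext h0
        exact ⟨fun q hq => by rw [hDi0]; simp,
          fun _ => hDi0⟩
  · -- Leibniz part
    intro p b b' hb
    set t : Fin r → ℚ := fun i => (-1 : ℚ) ^ ((m - (deg i : ℤ)) * (p : ℤ)) with ht
    set g : Fin r → B := fun i => Di i b * b' + (t i) • (b * Di i b') with hg
    have hkey : Di i₀ (b * b') = g i₀ := by
      have hmain : (∑ i : Fin r, a i * ((Di i (b * b') : B) : C))
          = (∑ i : Fin r, a i * ((g i : B) : C)) := by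
        have h1 : (∑ i : Fin r, a i * ((Di i (b * b') : B) : C))
            = D ((b : C) * (b' : C)) := by
          rw [← hDi (b * b')]; rfl
        rw [h1, hleib p _ _ hb, hDi b, hDi b', Finset.sum_mul, Finset.mul_sum,
          Finset.smul_sum, ← Finset.sum_add_distrib]
        refine Finset.sum_congr rfl fun i _ => ?_
        -- commute b past a i
        have hs : (b : C) * a i = (-1 : C) ^ (deg i * p) * (a i * (b : C)) := by
          have he := hcomm (deg i) p (a i) (ha i) (b : C) hb
          have hsq : ((-1 : C) ^ (deg i * p)) * ((-1 : C) ^ (deg i * p)) = 1 := by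
            rw [← pow_add]
            exact Even.neg_one_pow ⟨deg i * p, rfl⟩
          have h3 : (-1 : C) ^ (deg i * p) * (a i * (b : C))
              = (-1 : C) ^ (deg i * p) * ((-1 : C) ^ (deg i * p) * ((b : C) * a i)) := by
            rw [← he]
          rw [← mul_assoc ((-1 : C) ^ (deg i * p)) ((-1 : C) ^ (deg i * p)), hsq,
            one_mul] at h3
          exact h3.symm
        have hsC : ((-1 : C) ^ (deg i * p)) = algebraMap ℚ C ((-1 : ℚ) ^ (deg i * p)) := by
          rw [map_pow, map_neg, map_one]
        have hsign : (-1 : ℚ) ^ (m * (p : ℤ)) * (-1 : ℚ) ^ (deg i * p)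
            = t i := by
          rw [ht, ← zpow_natCast (-1 : ℚ) (deg i * p),
            ← zpow_add₀ (by norm_num : (-1 : ℚ) ≠ 0)]
          apply neg_one_zpow_congr
          push_cast
          ring_nf
          omega
        have hcoe : ((g i : B) : C)
            = ((Di i b : B) : C) * ((b' : B) : C) + (t i) • ((b : C) * ((Di i b' : B) : C)) := by
          simp [hg]
        rw [hcoe, mul_add, mul_smul_comm]
        congr 1
        · rw [mul_assoc]
        · -- (-1)^(mp) • (b * (a i * Di i b')) = t i • (a i * (b * Di i b'))
          rw [← mul_assoc, hs, mul_assoc, hsC, ← Algebra.smul_def, smul_smul, hsign,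
            ← mul_assoc]
      have := hinj _ _ hmain
      exact congrFun this i₀
    rw [hkey]
end

section
/- Let n ≥ 1 and let B be a graded-commutative ℕ-graded ℚ-algebra, finite-dimensional over ℚ, with B_0 = ℚ·1, which is generated as a ℚ-algebra by B_{2n} (hence B_p = 0 for all odd p). Let C be a graded-commutative ℕ-graded ℚ-algebra containing B as a graded subalgebra, and let z ∈ C be a homogeneous element of odd degree such that the ℚ-linear map B ⊕ B → C sending (b, b') to b + z·b' is bijective. Then every derivation D : C → C of negative degree vanishes on B; moreover B equals the even part ⊕_p C_{2p} of C, so every negative derivation of C vanishes on all even-degree elements of C. -/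
/-!
Since `B` is generated by its homogeneous piece `B_{2n}`, it lies in the Veronese subalgebra
`⨁ₖ C_{2nk}`, in particular in the even part of `C`, where graded commutativity makes every
element central and the sign in the Leibniz rule disappears. An even element `c = b + z b'`
of `C` has `z b'` both even and odd, so `c = b ∈ B`.

For a generator `x ∈ B_{2n}`, `D x` has degree `< 2n`, so `D x = s + t z` with `s, t ∈ ℚ`
(because `B_0 = ℚ`). Being homogeneous of positive degree in a finite-dimensional algebra, `x` is
nilpotent; if `x^m` is its last nonzero power, then
`0 = D(x^{m+1}) = (m+1) x^m D x = (m+1) (s x^m + z (t x^m))`,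
and freeness of `{1, z}` forces `s = t = 0`. The Leibniz rule propagates `D = 0` from the
generators to all of `B`.
-/

open DirectSum

section Decomposition

variable {ι R A : Type*} [DecidableEq ι] [CommRing R] [Ring A] [Algebra R A]
  (𝒜 : ι → Submodule R A) [Decomposition 𝒜]

theorem disjoint_iSup_comp_of_disjoint_range {κ κ' : Type*} {f : κ → ι} {g : κ' → ι}
    (h : Disjoint (Set.range f) (Set.range g)) :
    Disjoint (⨆ k, 𝒜 (f k)) (⨆ k, 𝒜 (g k)) := by
  simpa only [iSup_range] using
    (Decomposition.isInternal 𝒜).submodule_iSupIndep.disjoint_biSup_biSup h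

end Decomposition

section Veronese

variable {R A : Type*} [CommRing R] [Ring A] [Algebra R A]
  (𝒜 : ℕ → Submodule R A) [GradedAlgebra 𝒜]

theorem iSup_multiples_mul_self_le (d : ℕ) :
    (⨆ k, 𝒜 (d * k)) * (⨆ k, 𝒜 (d * k)) ≤ ⨆ k, 𝒜 (d * k) := by
  rw [Submodule.iSup_mul]
  refine iSup_le fun i => ?_
  rw [Submodule.mul_iSup]
  refine iSup_le fun j => Submodule.mul_le.2 fun a ha b hb => ?_
  exact Submodule.mem_iSup_of_mem (i + j) (by rw [mul_add]; exact SetLike.mul_mem_graded ha hb)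

def veronese (d : ℕ) : Subalgebra R A :=
  (⨆ k, 𝒜 (d * k)).toSubalgebra
    (Submodule.mem_iSup_of_mem 0 (by rw [mul_zero]; exact SetLike.GradedOne.one_mem))
    fun _ _ hx hy => iSup_multiples_mul_self_le 𝒜 d (Submodule.mul_mem_mul hx hy)

variable {𝒜}

theorem mem_veronese_of_mem {d k : ℕ} {x : A} (hx : x ∈ 𝒜 (d * k)) : x ∈ veronese 𝒜 d :=
  Submodule.mem_iSup_of_mem (p := fun k => 𝒜 (d * k)) k hx

theorem adjoin_le_veronese {d : ℕ} {s : Set A} (hs : s ⊆ 𝒜 d) :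
    Algebra.adjoin R s ≤ veronese 𝒜 d :=
  Algebra.adjoin_le fun x hx => mem_veronese_of_mem (k := 1) (by rw [mul_one]; exact hs hx)

theorem veronese_mono {d e : ℕ} (h : d ∣ e) : veronese 𝒜 e ≤ veronese 𝒜 d := by
  obtain ⟨c, rfl⟩ := h
  show (⨆ k, 𝒜 (d * c * k)) ≤ ⨆ k, 𝒜 (d * k)
  exact iSup_le fun k => by rw [mul_assoc]; exact le_iSup (fun k => 𝒜 (d * k)) (c * k)

theorem veronese_two_le_center
    (hcomm : ∀ (p q : ℕ), ∀ a ∈ 𝒜 p, ∀ b ∈ 𝒜 q, a * b = (-1 : A) ^ (p * q) * (b * a)) :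
    veronese 𝒜 2 ≤ Subalgebra.center R A := by
  classical
  have hhom : ∀ p, 𝒜 (2 * p) ≤ (Subalgebra.center R A).toSubmodule := fun p a ha => by
    rw [Subalgebra.mem_toSubmodule, Subalgebra.mem_center_iff]
    intro b
    rw [← sum_support_decompose 𝒜 b, Finset.sum_mul, Finset.mul_sum]
    refine Finset.sum_congr rfl fun q _ => ?_
    rw [hcomm _ _ a ha _ (decompose 𝒜 b q).2, Even.neg_one_pow ⟨p * q, by ring⟩, one_mul]
  exact iSup_le hhom

theorem map_mul_of_mem_veronese_two (D : A →ₗ[R] A) {j : ℕ}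
    (hD : ∀ (p : ℕ) (a b : A), a ∈ 𝒜 p → D (a * b) = D a * b + (-1 : A) ^ (j * p) * (a * D b))
    {a : A} (ha : a ∈ veronese 𝒜 2) (b : A) : D (a * b) = D a * b + a * D b := by
  refine Submodule.iSup_induction _ (motive := fun a => D (a * b) = D a * b + a * D b) ha
    (fun p a ha => ?_) (by simp) fun a a' h h' => ?_
  · rw [hD _ a b ha, Even.neg_one_pow ⟨j * p, by ring⟩, one_mul]
  · rw [add_mul, map_add, map_add, h, h']
    noncomm_ring

end Veronese

theorem isNilpotent_of_mem_of_mem_graded {K A : Type*} [Field K] [Ring A] [Algebra K A]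
    {𝒜 : ℕ → Submodule K A} [GradedAlgebra 𝒜] (S : Subalgebra K A) [FiniteDimensional K S]
    {d : ℕ} (hd : 0 < d) {x : A} (hxS : x ∈ S) (hx : x ∈ 𝒜 d) : IsNilpotent x := by
  by_contra hnil
  have hindep : iSupIndep fun k => 𝒜 (d * k) :=
    (Decomposition.isInternal 𝒜).submodule_iSupIndep.comp
      fun _ _ h => Nat.eq_of_mul_eq_mul_left hd h
  have hli : LinearIndependent K fun k : ℕ => x ^ k :=
    hindep.linearIndependent _ (v := fun k => x ^ k)
      (fun k => by simpa [smul_eq_mul, mul_comm] using SetLike.pow_mem_graded k hx)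
      fun k hk => hnil ⟨k, hk⟩
  have hliS : LinearIndependent K fun k : ℕ => (⟨x ^ k, pow_mem hxS k⟩ : S) :=
    LinearIndependent.of_comp S.val.toLinearMap hli
  exact Module.Finite.not_linearIndependent_of_infinite _ hliS

section Leibniz

variable {R A : Type*} [CommRing R] [Ring A] [Algebra R A] (D : A →ₗ[R] A)

theorem map_pow_succ_of_leibniz {x : A} (hleib : ∀ y, D (x * y) = D x * y + x * D y)
    (hx : Commute x (D x)) (k : ℕ) : D (x ^ (k + 1)) = (k + 1) • (x ^ k * D x) := by
  induction k with
  | zero => simp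
  | succ k ih =>
    rw [pow_succ' x (k + 1), hleib, ih, mul_smul_comm, ← mul_assoc, ← pow_succ',
      (hx.pow_left (k + 1)).symm.eq, succ_nsmul' _ (k + 1)]

theorem map_eq_zero_of_mem_adjoin {s : Set A} (h1 : D 1 = 0)
    (hleib : ∀ a ∈ Algebra.adjoin R s, ∀ b, D (a * b) = D a * b + a * D b)
    (hs : ∀ x ∈ s, D x = 0) {x : A} (hx : x ∈ Algebra.adjoin R s) : D x = 0 := by
  induction hx using Algebra.adjoin_induction with
  | mem x hx => exact hs x hx
  | algebraMap r => rw [Algebra.algebraMap_eq_smul_one, map_smul, h1, smul_zero]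
  | add x y _ _ hx hy => rw [map_add, hx, hy, add_zero]
  | mul x y hxs _ hx hy => rw [hleib x hxs, hx, hy, zero_mul, mul_zero, add_zero]

end Leibniz

theorem pow_mul_map_eq_zero_of_pow_succ_eq_zero {A : Type*} [Ring A] [Algebra ℚ A]
    (D : A →ₗ[ℚ] A) {x : A}
    (hleib : ∀ y, D (x * y) = D x * y + x * D y) (hx : Commute x (D x)) {m : ℕ}
    (hm : x ^ (m + 1) = 0) : x ^ m * D x = 0 := by
  have h := map_pow_succ_of_leibniz D hleib hx m
  rw [hm, map_zero, ← Nat.cast_smul_eq_nsmul ℚ] at h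
  exact (smul_eq_zero.mp h.symm).resolve_left (by positivity)

section FreeExtension

variable {K A : Type*} [Field K] [Ring A] [Algebra K A] {𝒜 : ℕ → Submodule K A}
  [GradedAlgebra 𝒜] {B : Subalgebra K A} {z : A}

theorem eq_zero_of_add_mul_eq_zero
    (hinj : Function.Injective fun bb : B × B => (bb.1 : A) + z * bb.2) {b b' : A}
    (hb : b ∈ B) (hb' : b' ∈ B) (h : b + z * b' = 0) : b = 0 ∧ b' = 0 := by
  have := @hinj (⟨b, hb⟩, ⟨b', hb'⟩) 0 (by simpa using h)
  simpa [Prod.ext_iff, Subtype.ext_iff] using this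

theorem mem_span_one_of_mem_of_lt (hB0 : B.toSubmodule ⊓ 𝒜 0 = Submodule.span K {(1 : A)})
    {d q : ℕ} (hBd : B ≤ veronese 𝒜 d) {b : A} (hb : b ∈ B) (hbq : b ∈ 𝒜 q) (hq : q < d) :
    b ∈ Submodule.span K {(1 : A)} := by
  rcases Nat.eq_zero_or_pos q with rfl | hq0
  · exact hB0 ▸ ⟨hb, hbq⟩
  · have hdisj : Disjoint (⨆ _ : Unit, 𝒜 q) (⨆ k, 𝒜 (d * k)) :=
      disjoint_iSup_comp_of_disjoint_range 𝒜 <| Set.disjoint_left.2 <| by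
        rintro _ ⟨_, rfl⟩ ⟨k, hk⟩
        exact hq0.ne' (Nat.eq_zero_of_dvd_of_lt ⟨k, hk.symm⟩ hq)
    rw [Submodule.disjoint_def.1 hdisj b (Submodule.mem_iSup_of_mem () hbq) (hBd hb)]
    exact zero_mem _

theorem exists_eq_smul_one_add_smul_of_lt (hBgr : ∀ b ∈ B, ∀ p : ℕ, (decompose 𝒜 b p : A) ∈ B)
    (hB0 : B.toSubmodule ⊓ 𝒜 0 = Submodule.span K {(1 : A)}) {d : ℕ} (hBd : B ≤ veronese 𝒜 d)
    {l : ℕ} (hz : z ∈ 𝒜 l)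
    (hsurj : Function.Surjective fun bb : B × B => (bb.1 : A) + z * bb.2)
    {c : A} {q : ℕ} (hc : c ∈ 𝒜 q) (hq : q < d) : ∃ s t : K, c = s • 1 + t • z := by
  classical
  have hscalar : ∀ {r}, r < d → ∀ b ∈ B, ∃ s : K, s • (1 : A) = decompose 𝒜 b r :=
    fun hr b hb => Submodule.mem_span_singleton.1 <|
      mem_span_one_of_mem_of_lt hB0 hBd (hBgr b hb _) (decompose 𝒜 b _).2 hr
  obtain ⟨⟨b, b'⟩, rfl⟩ := hsurj c
  dsimp only at hc ⊢
  obtain ⟨s, hs⟩ := hscalar hq b b.2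
  rw [← decompose_of_mem_same 𝒜 hc, decompose_add, DirectSum.add_apply, Submodule.coe_add,
    coe_decompose_mul_of_left_mem 𝒜 q hz, ← hs]
  split_ifs with hlq
  · obtain ⟨t, ht⟩ := hscalar (by omega : q - l < d) b' b'.2
    exact ⟨s, t, by rw [← ht, mul_smul_comm, mul_one]⟩
  · exact ⟨s, 0, by simp only [zero_smul, add_zero]⟩

theorem toSubmodule_eq_iSup_even {l : ℕ} (hl : Odd l) (hz : z ∈ 𝒜 l)
    (hsurj : Function.Surjective fun bb : B × B => (bb.1 : A) + z * bb.2)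
    (hB2 : B ≤ veronese 𝒜 2) : B.toSubmodule = ⨆ p, 𝒜 (2 * p) := by
  refine le_antisymm hB2 (iSup_le fun p c hc => ?_)
  obtain ⟨⟨b, b'⟩, rfl⟩ := hsurj c
  dsimp only at hc ⊢
  obtain ⟨t, rfl⟩ := hl
  have hodd : z * b' ∈ ⨆ k, 𝒜 (2 * k + 1) := by
    refine Submodule.iSup_induction _ (motive := fun x => z * x ∈ ⨆ k, 𝒜 (2 * k + 1))
      (hB2 b'.2) (fun k x hx => ?_) (by simp) fun x x' h h' => ?_
    · refine Submodule.mem_iSup_of_mem (t + k) ?_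
      convert SetLike.mul_mem_graded hz hx using 2
      ring
    · rw [mul_add]
      exact add_mem h h'
  have heven : z * b' ∈ ⨆ k, 𝒜 (2 * k) :=
    (Submodule.add_mem_iff_right _ (hB2 b.2)).1 (Submodule.mem_iSup_of_mem p hc)
  have hdisj : Disjoint (⨆ k, 𝒜 (2 * k)) (⨆ k, 𝒜 (2 * k + 1)) :=
    disjoint_iSup_comp_of_disjoint_range 𝒜 <| Set.disjoint_left.2 <| by
      rintro _ ⟨k, rfl⟩ ⟨k', hk'⟩
      dsimp only at hk'
      omega
  simp only [Submodule.disjoint_def.1 hdisj _ heven hodd, add_zero]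
  exact b.2

end FreeExtension

theorem map_eq_zero_of_mem_of_mem_graded {A : Type*} [Ring A] [Algebra ℚ A]
    {𝒜 : ℕ → Submodule ℚ A} [GradedAlgebra 𝒜]
    (hcomm : ∀ (p q : ℕ), ∀ a ∈ 𝒜 p, ∀ b ∈ 𝒜 q, a * b = (-1 : A) ^ (p * q) * (b * a))
    {B : Subalgebra ℚ A} (hBgr : ∀ b ∈ B, ∀ p : ℕ, (decompose 𝒜 b p : A) ∈ B)
    [FiniteDimensional ℚ B] (hB0 : B.toSubmodule ⊓ 𝒜 0 = Submodule.span ℚ {(1 : A)})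
    {n : ℕ} (hBn : B ≤ veronese 𝒜 (2 * n)) {z : A} {l : ℕ} (hz : z ∈ 𝒜 l)
    (hfree : Function.Bijective fun bb : B × B => (bb.1 : A) + z * bb.2)
    {j : ℕ} (hj : 1 ≤ j) (hjn : j ≤ 2 * n) (D : A →ₗ[ℚ] A)
    (hD : ∀ (p : ℕ), ∀ a ∈ 𝒜 (p + j), D a ∈ 𝒜 p)
    (hleib : ∀ (p : ℕ) (a b : A), a ∈ 𝒜 p →
      D (a * b) = D a * b + (-1 : A) ^ (j * p) * (a * D b))
    {x : A} (hxB : x ∈ B) (hx : x ∈ 𝒜 (2 * n)) : D x = 0 := by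
  nontriviality A
  have hB2 : B ≤ veronese 𝒜 2 := hBn.trans (veronese_mono (dvd_mul_right 2 n))
  have hcentral : ∀ y ∈ B, y ∈ Subalgebra.center ℚ A := fun y hy =>
    veronese_two_le_center hcomm (hB2 hy)
  obtain ⟨s, t, hDx⟩ := exists_eq_smul_one_add_smul_of_lt hBgr hB0 hBn hz hfree.2
    (hD (2 * n - j) x (by rwa [Nat.sub_add_cancel hjn])) (by omega : 2 * n - j < 2 * n)
  have hnil : IsNilpotent x := isNilpotent_of_mem_of_mem_graded B (by omega) hxB hx
  set m := nilpotencyClass x - 1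
  have hxm : x ^ m ≠ 0 := pow_pred_nilpotencyClass hnil
  have hxm1 : x ^ (m + 1) = 0 := by
    rw [Nat.sub_add_cancel (pos_nilpotencyClass_iff.2 hnil)]
    exact pow_nilpotencyClass hnil
  have hkill : x ^ m * D x = 0 :=
    pow_mul_map_eq_zero_of_pow_succ_eq_zero D (map_mul_of_mem_veronese_two D hleib (hB2 hxB))
      (Subalgebra.mem_center_iff.1 (hcentral x hxB) (D x)).symm hxm1
  have hsplit : s • x ^ m + z * (t • x ^ m) = 0 := by
    rw [← hkill, hDx, mul_add, mul_smul_comm, mul_smul_comm, mul_one, mul_smul_comm,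
      Subalgebra.mem_center_iff.1 (hcentral _ (pow_mem hxB m)) z]
  obtain ⟨hs, ht⟩ := eq_zero_of_add_mul_eq_zero hfree.1 (B.smul_mem (pow_mem hxB m) s)
    (B.smul_mem (pow_mem hxB m) t) hsplit
  rw [hDx, (smul_eq_zero.1 hs).resolve_right hxm, (smul_eq_zero.1 ht).resolve_right hxm,
    zero_smul, zero_smul, add_zero]

theorem negative_derivation_vanishes_on_even_part_general
    {C : Type} [Ring C] [Algebra ℚ C]
    (𝒞 : ℕ → Submodule ℚ C) [GradedAlgebra 𝒞]
    -- graded commutativity of `C`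
    (hcomm : ∀ (p q : ℕ), ∀ a ∈ 𝒞 p, ∀ b ∈ 𝒞 q,
      a * b = (-1 : C) ^ (p * q) * (b * a))
    (n : ℕ)
    -- `B` is a graded subalgebra of `C` …
    (B : Subalgebra ℚ C)
    (hBgr : ∀ b ∈ B, ∀ p : ℕ, (DirectSum.decompose 𝒞 b p : C) ∈ B)
    -- … finite-dimensional over ℚ …
    [FiniteDimensional ℚ B]
    -- … with `B₀ = ℚ·1` …
    (hB0 : B.toSubmodule ⊓ 𝒞 0 = Submodule.span ℚ {(1 : C)})
    -- … generated as a ℚ-algebra by `B_{2n}`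
    (hgen : Algebra.adjoin ℚ ((B.toSubmodule ⊓ 𝒞 (2 * n) : Submodule ℚ C) : Set C) = B)
    -- `z ∈ C` is homogeneous of odd degree `l`
    (z : C) (l : ℕ) (hl : Odd l) (hz : z ∈ 𝒞 l)
    -- `C` is a free `B`-module with basis `{1, z}`
    (hfree : Function.Bijective
      (fun bb : B × B => (bb.1 : C) + z * (bb.2 : C))) :
    -- then `B` is the even part of `C`, and every negative derivation of `C` vanishes on
    -- `B`, hence on all even-degree elements of `C`:
    (B.toSubmodule = ⨆ p : ℕ, 𝒞 (2 * p)) ∧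
    (∀ j : ℕ, 1 ≤ j → ∀ D : C →ₗ[ℚ] C,
      (∀ (p : ℕ), ∀ a ∈ 𝒞 (p + j), D a ∈ 𝒞 p) →
      (∀ (p : ℕ), p < j → ∀ a ∈ 𝒞 p, D a = 0) →
      (∀ (p : ℕ) (a b : C), a ∈ 𝒞 p →
        D (a * b) = D a * b + (-1 : C) ^ (j * p) * (a * D b)) →
      (∀ b ∈ B, D b = 0) ∧ (∀ p : ℕ, ∀ c ∈ 𝒞 (2 * p), D c = 0)) := by
  have hBn : B ≤ veronese 𝒞 (2 * n) := hgen ▸ adjoin_le_veronese inf_le_right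
  have hB2 : B ≤ veronese 𝒞 2 := hBn.trans (veronese_mono (dvd_mul_right 2 n))
  have heven := toSubmodule_eq_iSup_even hl hz hfree.2 hB2
  refine ⟨heven, fun j hj D hD hlow hleib => ?_⟩
  have hDB : ∀ b ∈ B, D b = 0 := by
    rw [← hgen]
    refine fun b hb => map_eq_zero_of_mem_adjoin D (hlow 0 hj 1 SetLike.GradedOne.one_mem)
      (fun a ha => map_mul_of_mem_veronese_two D hleib (hB2 (hgen ▸ ha))) (fun x hx => ?_) hb
    rcases lt_or_ge (2 * n) j with hjn | hjn
    · exact hlow _ hjn x hx.2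
    · exact map_eq_zero_of_mem_of_mem_graded hcomm hBgr hB0 hBn hz hfree hj hjn D hD hleib
        hx.1 hx.2
  refine ⟨hDB, fun p c hc => hDB c ?_⟩
  exact (heven.symm ▸ Submodule.mem_iSup_of_mem p hc : c ∈ B.toSubmodule)

/-- algebraic content of Proposition 8.1 of Belegradek–Kapovitch for the
Eschenburg and Bazaikin manifolds.  Let `n ≥ 1` and let `B` be a graded-commutative
ℕ-graded ℚ-algebra, finite-dimensional over ℚ, with `B₀ = ℚ·1`, generated as a ℚ-algebra
by `B_{2n}`.  Let `C` be a graded-commutative ℕ-graded ℚ-algebra containing `B` as a graded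
subalgebra, and let `z ∈ C` be homogeneous of odd degree with `(b, b') ↦ b + z·b'` a
bijection `B ⊕ B → C`.  Then every negative derivation `D : C → C` vanishes on `B`;
moreover `B` equals the even part `⊕_p C_{2p}` of `C`, so every negative derivation of `C`
vanishes on all even-degree elements of `C`. -/
theorem negative_derivation_vanishes_on_even_part
    {C : Type} [Ring C] [Algebra ℚ C]
    (𝒞 : ℕ → Submodule ℚ C) [GradedAlgebra 𝒞]
    -- graded commutativity of `C`
    (hcomm : ∀ (p q : ℕ), ∀ a ∈ 𝒞 p, ∀ b ∈ 𝒞 q,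
      a * b = (-1 : C) ^ (p * q) * (b * a))
    (n : ℕ) (hn : 1 ≤ n)
    -- `B` is a graded subalgebra of `C` …
    (B : Subalgebra ℚ C)
    (hBgr : ∀ b ∈ B, ∀ p : ℕ, (DirectSum.decompose 𝒞 b p : C) ∈ B)
    -- … finite-dimensional over ℚ …
    [FiniteDimensional ℚ B]
    -- … with `B₀ = ℚ·1` …
    (hB0 : B.toSubmodule ⊓ 𝒞 0 = Submodule.span ℚ {(1 : C)})
    -- … generated as a ℚ-algebra by `B_{2n}`
    (hgen : Algebra.adjoin ℚ ((B.toSubmodule ⊓ 𝒞 (2 * n) : Submodule ℚ C) : Set C) = B)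
    -- `z ∈ C` is homogeneous of odd degree `l`
    (z : C) (l : ℕ) (hl : Odd l) (hz : z ∈ 𝒞 l)
    -- `C` is a free `B`-module with basis `{1, z}`
    (hfree : Function.Bijective
      (fun bb : B × B => (bb.1 : C) + z * (bb.2 : C))) :
    -- then `B` is the even part of `C`, and every negative derivation of `C` vanishes on
    -- `B`, hence on all even-degree elements of `C`:
    (B.toSubmodule = ⨆ p : ℕ, 𝒞 (2 * p)) ∧
    (∀ j : ℕ, 1 ≤ j → ∀ D : C →ₗ[ℚ] C,
      (∀ (p : ℕ), ∀ a ∈ 𝒞 (p + j), D a ∈ 𝒞 p) →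
      (∀ (p : ℕ), p < j → ∀ a ∈ 𝒞 p, D a = 0) →
      (∀ (p : ℕ) (a b : C), a ∈ 𝒞 p →
        D (a * b) = D a * b + (-1 : C) ^ (j * p) * (a * D b)) →
      (∀ b ∈ B, D b = 0) ∧ (∀ p : ℕ, ∀ c ∈ 𝒞 (2 * p), D c = 0)) :=
  negative_derivation_vanishes_on_even_part_general 𝒞 hcomm n B hBgr hB0 hgen z l hl hz hfree
end
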